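/- arXiv:1611.08768 — 6 statements merged into one kernel-verified Lean document; each statement's English description precedes it below -/
import Mathlib

section
/- Let φ : B → [-∞,+∞) be a plurisubharmonic function on the open unit ball B ⊆ ℂⁿ, let K ≥ 0, and consider the collection H_K(φ) of holomorphic functions f : B → ℂ with ∫_B |f|²·e^{-φ} dλ ≤ K (the integrand takes values in [0,+∞], with e^{-φ(x)} = +∞ where φ(x) = -∞ and the convention 0·(+∞) = 0). Then every sequence of functions in H_K(φ) has a subsequence that converges uniformly on every compact subset of B to an element of H_K(φ). -/
noncomputable section

open MeasureTheory ENNReal Metric Complex Filter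

/-! Lebesgue measure on `ℂⁿ ≅ ℝ^{2n}`, realized on `EuclideanSpace ℂ (Fin n)`. -/

instance (n : ℕ) : InnerProductSpace ℝ (EuclideanSpace ℂ (Fin n)) :=
  InnerProductSpace.complexToReal
instance (n : ℕ) : MeasurableSpace (EuclideanSpace ℂ (Fin n)) := borel _
instance (n : ℕ) : BorelSpace (EuclideanSpace ℂ (Fin n)) := ⟨rfl⟩

/-- The positive part of an extended real number, as an element of `ℝ≥0∞`. -/
def erealPos (t : EReal) : ℝ≥0∞ :=
  if t = ⊤ then ⊤ else ENNReal.ofReal t.toReal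

/-- The integral of an `EReal`-valued function: it equals `⊤` whenever the positive part
has infinite integral, and otherwise takes values in `[-∞, +∞)`, being `-∞` exactly when
the negative part has infinite integral. -/
def erealIntegral {α : Type*} [MeasurableSpace α] (μ : Measure α) (f : α → EReal) : EReal :=
  if ∫⁻ a, erealPos (f a) ∂μ = ⊤ then ⊤
  else (∫⁻ a, erealPos (f a) ∂μ).toEReal - (∫⁻ a, erealPos (-f a) ∂μ).toEReal

/-- A plurisubharmonic function on a subset `U ⊆ ℂⁿ`: an upper semicontinuous function
with values in `[-∞, +∞)` that is locally Lebesgue-integrable on `U` and satisfies the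
mean-value inequality `(φ ∘ γ)(0) ≤ (1/π) ∫_Δ (φ ∘ γ) dλ` for every holomorphic map
`γ : Δ → U` from the open unit disk `Δ ⊆ ℂ`. -/
structure PshOn {n : ℕ} (U : Set (EuclideanSpace ℂ (Fin n)))
    (φ : EuclideanSpace ℂ (Fin n) → EReal) : Prop where
  usc : UpperSemicontinuousOn φ U
  ne_top : ∀ x ∈ U, φ x ≠ ⊤
  locInt : ∀ x ∈ U, ∃ r > 0, ball x r ⊆ U ∧
    (∀ᵐ y ∂(volume.restrict (ball x r)), φ y ≠ ⊥) ∧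
    IntegrableOn (fun y => (φ y).toReal) (ball x r)
  meanValue : ∀ γ : ℂ → EuclideanSpace ℂ (Fin n),
    DifferentiableOn ℂ γ (ball 0 1) → Set.MapsTo γ (ball 0 1) U →
    φ (γ 0) ≤ ((Real.pi⁻¹ : ℝ) : EReal) *
      erealIntegral (volume.restrict (ball (0 : ℂ) 1)) (fun z => φ (γ z))

/-- The weight `e^{-φ(x)} ∈ [0,+∞]` attached to an `EReal`-valued function, with
`e^{-(-∞)} = +∞`. -/
def expNeg (t : EReal) : ℝ≥0∞ :=
  if t = ⊥ then ⊤ else ENNReal.ofReal (Real.exp (-t.toReal))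

section Aux
open intervalIntegral
variable {n : ℕ}

/-- rotation as a real-linear isometry equiv -/
def rotE (n : ℕ) (c : ℂ) (hc : ‖c‖ = 1) :
    (EuclideanSpace ℂ (Fin n)) ≃ₗᵢ[ℝ] (EuclideanSpace ℂ (Fin n)) :=
  ⟨(LinearEquiv.smulOfNeZero ℂ _ c (by intro h; rw [h] at hc; simp at hc)).restrictScalars ℝ,
   fun x => by show ‖c • x‖ = ‖x‖; rw [norm_smul, hc, one_mul]⟩

lemma rotE_apply (c : ℂ) (hc : ‖c‖ = 1) (v : EuclideanSpace ℂ (Fin n)) :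
    rotE n c hc v = c • v := rfl

lemma rot_integral (F : EuclideanSpace ℂ (Fin n) → ℂ) (s : ℝ) (c : ℂ) (hc : ‖c‖ = 1) :
    ∫ v in ball (0 : EuclideanSpace ℂ (Fin n)) s, F (c • v)
      = ∫ v in ball (0 : EuclideanSpace ℂ (Fin n)) s, F v := by
  have hmp := (rotE n c hc).measurePreserving
  have hemb : MeasurableEmbedding (rotE n c hc) :=
    (rotE n c hc).toHomeomorph.toMeasurableEquiv.measurableEmbedding
  have hpre : (rotE n c hc) ⁻¹' (ball 0 s) = ball 0 s := by
    ext v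
    simp only [Set.mem_preimage, mem_ball, dist_zero_right]
    rw [rotE_apply, norm_smul, hc, one_mul]
  calc ∫ v in ball (0 : EuclideanSpace ℂ (Fin n)) s, F (c • v)
      = ∫ v in (rotE n c hc) ⁻¹' (ball 0 s), F ((rotE n c hc) v) := by rw [hpre]; rfl
    _ = ∫ v in ball (0 : EuclideanSpace ℂ (Fin n)) s, F v :=
        hmp.setIntegral_preimage_emb hemb F _

lemma translate_integral (F : EuclideanSpace ℂ (Fin n) → ℂ) (x : EuclideanSpace ℂ (Fin n))
    (s : ℝ) :
    ∫ v in ball (0 : EuclideanSpace ℂ (Fin n)) s, F (x + v) = ∫ w in ball x s, F w := by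
  have hmp : MeasurePreserving (fun v : EuclideanSpace ℂ (Fin n) => x + v) volume volume :=
    measurePreserving_add_left volume x
  have hemb : MeasurableEmbedding (fun v : EuclideanSpace ℂ (Fin n) => x + v) :=
    (MeasurableEquiv.addLeft x).measurableEmbedding
  have hpre : (fun v : EuclideanSpace ℂ (Fin n) => x + v) ⁻¹' (ball x s) = ball 0 s := by
    ext v
    simp [dist_eq_norm, add_sub_cancel_left]
  calc ∫ v in ball (0 : EuclideanSpace ℂ (Fin n)) s, F (x + v)
      = ∫ v in (fun v : EuclideanSpace ℂ (Fin n) => x + v) ⁻¹' (ball x s), F (x + v) := by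
        rw [hpre]
    _ = ∫ w in ball x s, F w := hmp.setIntegral_preimage_emb hemb F _

theorem circle_mean_value (g : ℂ → ℂ) (R : ℝ) (hR : 1 < R)
    (hg : DifferentiableOn ℂ g (ball 0 R)) :
    ∫ θ in (0:ℝ)..(2*Real.pi), g (circleMap 0 1 θ) = (2*Real.pi) • g 0 := by
  have hdc : DiffContOnCl ℂ g (ball (0:ℂ) 1) := by
    refine ⟨hg.mono (ball_subset_ball hR.le), (hg.continuousOn).mono ?_⟩
    rw [closure_ball (0:ℂ) one_ne_zero]
    exact closedBall_subset_ball hR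
  have h := hdc.circleIntegral_sub_inv_smul (w := 0) (by simp)
  rw [circleIntegral] at h
  simp only [deriv_circleMap, sub_zero, smul_eq_mul] at h
  have key : ∀ θ : ℝ, circleMap 0 1 θ * I * ((circleMap 0 1 θ)⁻¹ * g (circleMap 0 1 θ))
      = I * g (circleMap 0 1 θ) := by
    intro θ
    have h0 : circleMap 0 1 θ ≠ 0 := by
      intro hz
      exact one_ne_zero (circleMap_eq_center_iff.mp hz)
    field_simp
  simp only [key] at h
  rw [intervalIntegral.integral_const_mul] at h
  have hI : (I : ℂ) ≠ 0 := I_ne_zero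
  have h2 : I * ((2*Real.pi:ℝ) • g 0) = 2 * Real.pi * I * g 0 := by
    simp [real_smul]; ring
  rw [← h2] at h
  exact mul_left_cancel₀ hI h

/-- Mean value property over Euclidean balls for holomorphic functions on the unit ball. -/
theorem mvp (f : EuclideanSpace ℂ (Fin n) → ℂ)
    (hf : DifferentiableOn ℂ f (ball 0 1)) (x : EuclideanSpace ℂ (Fin n)) (s : ℝ)
    (hs : 0 < s) (hsub : closedBall x s ⊆ ball (0 : EuclideanSpace ℂ (Fin n)) 1) :
    ∫ w in ball x s, f w = (volume (ball x s)).toReal • f x := by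
  -- the slice mean value: for each v in ball 0 s
  have hslice : ∀ v ∈ ball (0 : EuclideanSpace ℂ (Fin n)) s,
      ∫ θ in Set.Ioc (0:ℝ) (2*Real.pi), f (x + circleMap 0 1 θ • v) = (2*Real.pi) • f x := by
    intro v hv
    rw [mem_ball, dist_zero_right] at hv
    set M : ℝ := max ‖v‖ (s/2) with hM
    have hM0 : 0 < M := lt_max_of_lt_right (by linarith)
    have hMs : M < s := max_lt hv (by linarith)
    set R : ℝ := s / M with hRdef
    have hR : 1 < R := (one_lt_div hM0).2 hMs
    have hmem : ∀ ζ : ℂ, ζ ∈ ball (0:ℂ) R → x + ζ • v ∈ ball x s := by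
      intro ζ hζ
      rw [mem_ball, dist_zero_right] at hζ
      rw [mem_ball, dist_eq_norm, add_sub_cancel_left, norm_smul]
      calc ‖ζ‖ * ‖v‖ ≤ ‖ζ‖ * M := by
            exact mul_le_mul_of_nonneg_left (le_max_left _ _) (norm_nonneg _)
        _ < R * M := by exact mul_lt_mul_of_pos_right hζ hM0
        _ = s := by rw [hRdef, div_mul_cancel₀ s hM0.ne']
    have hg : DifferentiableOn ℂ (fun ζ : ℂ => f (x + ζ • v)) (ball 0 R) := by
      intro ζ hζ
      have hx' : x + ζ • v ∈ ball (0 : EuclideanSpace ℂ (Fin n)) 1 :=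
        hsub (ball_subset_closedBall (hmem ζ hζ))
      have hfd : DifferentiableAt ℂ f (x + ζ • v) :=
        hf.differentiableAt (isOpen_ball.mem_nhds hx')
      exact (hfd.comp ζ ((differentiableAt_id.smul_const v).const_add x)).differentiableWithinAt
    have := circle_mean_value (fun ζ => f (x + ζ • v)) R hR hg
    simp only [zero_smul, add_zero] at this
    rw [intervalIntegral.integral_of_le (by positivity)] at this
    exact this
  -- translate: LHS = ∫ v in ball 0 s, f (x + v)
  rw [← translate_integral f x s]
  set B : Set (EuclideanSpace ℂ (Fin n)) := ball 0 s with hB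
  have hpi : (0:ℝ) < 2 * Real.pi := by positivity
  -- integrability on the product
  have hcont : ContinuousOn (fun p : ℝ × EuclideanSpace ℂ (Fin n) =>
      f (x + circleMap 0 1 p.1 • p.2)) ((Set.Icc (0:ℝ) (2*Real.pi)) ×ˢ closedBall 0 s) := by
    have hmap : Continuous (fun p : ℝ × EuclideanSpace ℂ (Fin n) =>
        x + circleMap 0 1 p.1 • p.2) := by
      exact continuous_const.add ((continuous_circleMap 0 1).comp continuous_fst |>.smul
        continuous_snd)
    apply hf.continuousOn.comp hmap.continuousOn
    rintro ⟨θ, v⟩ ⟨-, hv⟩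
    rw [mem_closedBall, dist_zero_right] at hv
    apply hsub
    rw [mem_closedBall, dist_eq_norm, add_sub_cancel_left, norm_smul]
    calc ‖circleMap 0 1 θ‖ * ‖v‖ = ‖v‖ := by
          rw [norm_circleMap_zero, abs_one, one_mul]
      _ ≤ s := hv
  have hKcpt : IsCompact ((Set.Icc (0:ℝ) (2*Real.pi)) ×ˢ closedBall (0:EuclideanSpace ℂ (Fin n)) s) :=
    isCompact_Icc.prod (isCompact_closedBall _ _)
  have hint : IntegrableOn (fun p : ℝ × EuclideanSpace ℂ (Fin n) =>
      f (x + circleMap 0 1 p.1 • p.2)) ((Set.Ioc (0:ℝ) (2*Real.pi)) ×ˢ B) volume := by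
    apply (hcont.integrableOn_compact hKcpt).mono_set
    exact Set.prod_mono Set.Ioc_subset_Icc_self ball_subset_closedBall
  have hint' : Integrable (Function.uncurry (fun θ v =>
      f (x + circleMap 0 1 θ • v)))
      ((volume.restrict (Set.Ioc (0:ℝ) (2*Real.pi))).prod (volume.restrict B)) := by
    rw [Measure.prod_restrict]
    rw [IntegrableOn, Measure.volume_eq_prod] at hint
    exact hint
  have hswap := MeasureTheory.integral_integral_swap hint'
  -- inner integrals over v are constant in θ
  have hrotconst : ∀ θ : ℝ, ∫ v in B, f (x + circleMap 0 1 θ • v)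
      = ∫ v in B, f (x + v) := by
    intro θ
    have := rot_integral (fun w => f (x + w)) s (circleMap 0 1 θ)
      (by rw [norm_circleMap_zero, abs_one])
    exact this
  have hleft : ∫ θ in Set.Ioc (0:ℝ) (2*Real.pi), ∫ v in B, f (x + circleMap 0 1 θ • v)
      = (2*Real.pi) • ∫ v in B, f (x + v) := by
    rw [setIntegral_congr_fun measurableSet_Ioc (fun θ _ => hrotconst θ)]
    rw [setIntegral_const]
    rw [Real.volume_real_Ioc_of_le hpi.le, sub_zero]
  have hright : ∫ v in B, ∫ θ in Set.Ioc (0:ℝ) (2*Real.pi), f (x + circleMap 0 1 θ • v)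
      = (volume B).toReal • ((2*Real.pi) • f x) := by
    rw [setIntegral_congr_fun measurableSet_ball (fun v hv => hslice v hv)]
    rw [setIntegral_const]
    rfl
  rw [hleft, hright] at hswap
  have h2pi : (2*Real.pi) ≠ 0 := ne_of_gt hpi
  have := congrArg (fun z => (2*Real.pi)⁻¹ • z) hswap
  simp only [smul_smul, inv_mul_cancel₀ h2pi, one_smul] at this
  rw [this, Measure.addHaar_ball_center volume x s, ← hB]
  congr 1
  field_simp

open Topology

/-- USC functions avoiding ⊤ are bounded above (by a real) on compacts. -/
theorem usc_bound {φ : EuclideanSpace ℂ (Fin n) → EReal}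
    (husc : UpperSemicontinuousOn φ (ball 0 1))
    (htop : ∀ x ∈ ball (0 : EuclideanSpace ℂ (Fin n)) 1, φ x ≠ ⊤)
    {C : Set (EuclideanSpace ℂ (Fin n))} (hCB : C ⊆ ball 0 1) (hC : IsCompact C) :
    ∃ M : ℝ, ∀ z ∈ C, φ z < (M : EReal) := by
  have hch : ∀ x ∈ C, ∃ c : ℝ, {z | φ z < (c : EReal)} ∈ 𝓝 x := by
    intro x hx
    obtain ⟨c, hc1, -⟩ := EReal.exists_between_coe_real ((htop x (hCB hx)).lt_top)
    have h1 : ∀ᶠ z in 𝓝[ball (0:EuclideanSpace ℂ (Fin n)) 1] x, φ z < (c : EReal) :=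
      husc x (hCB hx) c hc1
    rw [nhdsWithin_eq_nhds.2 (isOpen_ball.mem_nhds (hCB hx))] at h1
    exact ⟨c, h1⟩
  choose! c hc using hch
  obtain ⟨t, htC, hcov⟩ := hC.elim_nhds_subcover (fun x => {z | φ z < (c x : EReal)})
    (fun x hx => hc x hx)
  rcases t.eq_empty_or_nonempty with rfl | hne
  · exact ⟨0, fun z hz => by simpa using hcov hz⟩
  · refine ⟨t.sup' hne c, fun z hz => ?_⟩
    obtain ⟨x, hxt, hxz⟩ := Set.mem_iUnion₂.mp (hcov hz)
    calc φ z < (c x : EReal) := hxz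
      _ ≤ ((t.sup' hne c : ℝ) : EReal) := by
          exact_mod_cast EReal.coe_le_coe_iff.2 (Finset.le_sup' c hxt)

theorem expNeg_lower {φ : EuclideanSpace ℂ (Fin n) → EReal} {M : ℝ}
    {z : EuclideanSpace ℂ (Fin n)} (h : φ z < (M : EReal)) :
    ENNReal.ofReal (Real.exp (-M)) ≤ expNeg (φ z) := by
  rw [expNeg]
  split_ifs with hb
  · exact le_top
  · apply ENNReal.ofReal_le_ofReal
    apply Real.exp_le_exp.2
    apply neg_le_neg
    have := EReal.toReal_le_toReal h.le hb (by simp)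
    simpa using this

theorem bound_on_compact {φ : EuclideanSpace ℂ (Fin n) → EReal}
    (husc : UpperSemicontinuousOn φ (ball 0 1))
    (htop : ∀ x ∈ ball (0 : EuclideanSpace ℂ (Fin n)) 1, φ x ≠ ⊤)
    {K : ℝ} {f : ℕ → EuclideanSpace ℂ (Fin n) → ℂ}
    (hfd : ∀ k, DifferentiableOn ℂ (f k) (ball 0 1))
    (hfK : ∀ k, ∫⁻ x in ball (0 : EuclideanSpace ℂ (Fin n)) 1,
      ENNReal.ofReal (‖f k x‖ ^ 2) * expNeg (φ x) ≤ ENNReal.ofReal K)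
    {C : Set (EuclideanSpace ℂ (Fin n))} (hCB : C ⊆ ball 0 1) (hC : IsCompact C) :
    ∃ M : ℝ, ∀ k, ∀ z ∈ C, ‖f k z‖ ≤ M := by
  obtain ⟨δ, hδ, hthick⟩ := hC.exists_cthickening_subset_open isOpen_ball hCB
  have hC1 : IsCompact (cthickening δ C) := hC.cthickening
  obtain ⟨Mφ, hMφ⟩ := usc_bound husc htop hthick hC1
  set c : ℝ≥0∞ := ENNReal.ofReal (Real.exp (-Mφ)) with hcdef
  have hc0 : c ≠ 0 := by
    simp only [hcdef, ne_eq, ENNReal.ofReal_eq_zero, not_le]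
    exact Real.exp_pos _
  have hcT : c ≠ ⊤ := ENNReal.ofReal_ne_top
  set A : ℝ≥0∞ := volume (ball (0 : EuclideanSpace ℂ (Fin n)) δ) + c⁻¹ * ENNReal.ofReal K
    with hAdef
  have hAne : A ≠ ⊤ := by
    apply ENNReal.add_ne_top.2
    constructor
    · exact measure_ball_lt_top.ne
    · exact ENNReal.mul_ne_top (ENNReal.inv_ne_top.2 hc0) ENNReal.ofReal_ne_top
  have hvol : (0:ℝ) < (volume (ball (0 : EuclideanSpace ℂ (Fin n)) δ)).toReal :=
    ENNReal.toReal_pos (measure_ball_pos _ _ hδ).ne' measure_ball_lt_top.ne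
  refine ⟨A.toReal / (volume (ball (0 : EuclideanSpace ℂ (Fin n)) δ)).toReal, fun k z hz => ?_⟩
  have hcbsub : closedBall z δ ⊆ ball (0 : EuclideanSpace ℂ (Fin n)) 1 :=
    (closedBall_subset_cthickening hz δ).trans hthick
  -- step 1 : L¹ bound on the ball
  have hL1 : ∫⁻ w in ball z δ, ENNReal.ofReal ‖f k w‖ ≤ A := by
    have hptwise : ∀ w ∈ ball z δ, ENNReal.ofReal ‖f k w‖ ≤
        1 + c⁻¹ * (ENNReal.ofReal (‖f k w‖ ^ 2) * expNeg (φ w)) := by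
      intro w hw
      have hwC1 : w ∈ cthickening δ C := (ball_subset_closedBall.trans
        (closedBall_subset_cthickening hz δ)) hw
      have hexp : c ≤ expNeg (φ w) := expNeg_lower (hMφ w hwC1)
      have h1 : ENNReal.ofReal ‖f k w‖ ≤ 1 + ENNReal.ofReal (‖f k w‖ ^ 2) := by
        rw [← ENNReal.ofReal_one, ← ENNReal.ofReal_add zero_le_one (by positivity)]
        apply ENNReal.ofReal_le_ofReal
        nlinarith [norm_nonneg (f k w)]
      refine h1.trans (add_le_add_right ?_ 1)
      calc ENNReal.ofReal (‖f k w‖ ^ 2)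
          = c⁻¹ * (ENNReal.ofReal (‖f k w‖ ^ 2) * c) := by
            rw [mul_comm (ENNReal.ofReal _) c, ← mul_assoc, ENNReal.inv_mul_cancel hc0 hcT,
              one_mul]
        _ ≤ c⁻¹ * (ENNReal.ofReal (‖f k w‖ ^ 2) * expNeg (φ w)) := by
            exact mul_le_mul_right (mul_le_mul_right hexp _) _
    calc ∫⁻ w in ball z δ, ENNReal.ofReal ‖f k w‖
        ≤ ∫⁻ w in ball z δ, (1 + c⁻¹ * (ENNReal.ofReal (‖f k w‖ ^ 2) * expNeg (φ w))) := by
          apply lintegral_mono_ae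
          filter_upwards [ae_restrict_mem measurableSet_ball] with w hw
          exact hptwise w hw
      _ = volume (ball z δ) + c⁻¹ * ∫⁻ w in ball z δ,
            ENNReal.ofReal (‖f k w‖ ^ 2) * expNeg (φ w) := by
          rw [lintegral_add_left measurable_const, lintegral_const_mul' _ _
            (ENNReal.inv_ne_top.2 hc0), lintegral_const, Measure.restrict_apply_univ, one_mul]
      _ ≤ volume (ball z δ) + c⁻¹ * ENNReal.ofReal K := by
          gcongr
          refine le_trans (lintegral_mono_set ?_) (hfK k)
          exact ball_subset_closedBall.trans hcbsub
      _ = A := by rw [hAdef, Measure.addHaar_ball_center]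
  -- step 2 : mean value property
  have hmvp := mvp (f k) (hfd k) z δ hδ hcbsub
  have hnorm : ‖f k z‖ * (volume (ball z δ)).toReal ≤ A.toReal := by
    have h1 : ‖∫ w in ball z δ, f k w‖ ≤ (∫⁻ w in ball z δ, ENNReal.ofReal ‖f k w‖).toReal :=
      norm_integral_le_lintegral_norm _
    rw [hmvp] at h1
    rw [norm_smul, Real.norm_eq_abs, _root_.abs_of_nonneg ENNReal.toReal_nonneg] at h1
    calc ‖f k z‖ * (volume (ball z δ)).toReal
        = (volume (ball z δ)).toReal * ‖f k z‖ := mul_comm _ _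
      _ ≤ (∫⁻ w in ball z δ, ENNReal.ofReal ‖f k w‖).toReal := h1
      _ ≤ A.toReal := ENNReal.toReal_mono hAne hL1
  rw [Measure.addHaar_ball_center] at hnorm
  exact (le_div_iff₀ hvol).2 hnorm

/-- Cauchy estimate on the derivative. -/
theorem cauchy_deriv_bound {u : EuclideanSpace ℂ (Fin n) → ℂ}
    (hu : DifferentiableOn ℂ u (ball 0 1)) {x : EuclideanSpace ℂ (Fin n)} {s M : ℝ}
    (hs : 0 < s) (hsub : closedBall x (2*s) ⊆ ball (0 : EuclideanSpace ℂ (Fin n)) 1)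
    (hM : ∀ z ∈ closedBall x (2*s), ‖u z‖ ≤ M) :
    ∀ y ∈ closedBall x s, ‖fderiv ℂ u y‖ ≤ 2*M/s := by
  have hM0 : 0 ≤ M := le_trans (norm_nonneg _) (hM x (mem_closedBall_self (by linarith)))
  intro y hy
  have hyB : y ∈ ball (0 : EuclideanSpace ℂ (Fin n)) 1 :=
    hsub (closedBall_subset_closedBall (by linarith) hy)
  apply ContinuousLinearMap.opNorm_le_bound _ (by positivity)
  intro w
  rcases eq_or_ne w 0 with rfl | hw
  · simp
  -- reduce to unit vectors
  have hunit : ∀ v : EuclideanSpace ℂ (Fin n), ‖v‖ = 1 → ‖fderiv ℂ u y v‖ ≤ 2*M/s := by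
    intro v hv
    set h : ℂ → ℂ := fun ζ => u (y + ζ • v) with hhdef
    have hmem : ∀ ζ : ℂ, ζ ∈ ball (0:ℂ) s → y + ζ • v ∈ ball (0 : EuclideanSpace ℂ (Fin n)) 1 := by
      intro ζ hζ
      rw [mem_ball, dist_zero_right] at hζ
      apply hsub
      rw [mem_closedBall]
      calc dist (y + ζ • v) x ≤ dist (y + ζ • v) y + dist y x := dist_triangle _ _ _
        _ ≤ ‖ζ‖ * ‖v‖ + s := by
            rw [dist_eq_norm, add_sub_cancel_left, norm_smul]
            exact add_le_add le_rfl (mem_closedBall.mp hy)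
        _ ≤ 2 * s := by rw [hv, mul_one]; linarith
    have hdiffh : DifferentiableOn ℂ h (ball (0:ℂ) s) := by
      intro ζ hζ
      have hfd : DifferentiableAt ℂ u (y + ζ • v) :=
        hu.differentiableAt (isOpen_ball.mem_nhds (hmem ζ hζ))
      exact (hfd.comp ζ ((differentiableAt_id.smul_const v).const_add y)).differentiableWithinAt
    have hderiv0 : deriv h 0 = fderiv ℂ u y v := by
      have hA : HasDerivAt (fun ζ : ℂ => y + ζ • v) v 0 := by
        simpa using ((hasDerivAt_id (0:ℂ)).smul_const v).const_add y
      have hud : DifferentiableAt ℂ u y := hu.differentiableAt (isOpen_ball.mem_nhds hyB)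
      have h0 : y + (0:ℂ) • v = y := by simp
      have hud' : HasFDerivAt u (fderiv ℂ u y) (y + (0:ℂ) • v) := by
        rw [h0]; exact hud.hasFDerivAt
      have : HasDerivAt h (fderiv ℂ u y v) 0 := hud'.comp_hasDerivAt (0:ℂ) hA
      exact this.deriv
    have hcd : cderiv (s/2) h 0 = deriv h 0 :=
      cderiv_eq_deriv isOpen_ball hdiffh (by linarith)
        (closedBall_subset_ball (by linarith))
    have hbnd : ‖cderiv (s/2) h 0‖ ≤ M / (s/2) := by
      apply norm_cderiv_le (by linarith)
      intro ζ hζ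
      rw [mem_sphere, dist_zero_right] at hζ
      apply hM
      rw [mem_closedBall]
      calc dist (y + ζ • v) x ≤ dist (y + ζ • v) y + dist y x := dist_triangle _ _ _
        _ ≤ ‖ζ‖ * ‖v‖ + s := by
            rw [dist_eq_norm, add_sub_cancel_left, norm_smul]
            exact add_le_add le_rfl (mem_closedBall.mp hy)
        _ ≤ 2 * s := by rw [hζ, hv, mul_one]; linarith
    rw [← hderiv0, ← hcd]
    calc ‖cderiv (s/2) h 0‖ ≤ M / (s/2) := hbnd
      _ = 2*M/s := by field_simp
  -- scaling
  set v : EuclideanSpace ℂ (Fin n) := ‖w‖⁻¹ • w with hvdef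
  have hnv : ‖v‖ = 1 := by
    rw [hvdef, norm_smul, norm_inv, norm_norm, inv_mul_cancel₀ (norm_ne_zero_iff.2 hw)]
  have hw' : w = (‖w‖ : ℝ) • v := by
    rw [hvdef, smul_smul, mul_inv_cancel₀ (norm_ne_zero_iff.2 hw), one_smul]
  calc ‖fderiv ℂ u y w‖ = ‖fderiv ℂ u y ((‖w‖ : ℝ) • v)‖ := by rw [← hw']
    _ = ‖w‖ * ‖fderiv ℂ u y v‖ := by
        rw [ContinuousLinearMap.map_smul_of_tower, norm_smul, Real.norm_eq_abs,
          _root_.abs_of_nonneg (norm_nonneg w)]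
    _ ≤ ‖w‖ * (2*M/s) := by
        exact mul_le_mul_of_nonneg_left (hunit v hnv) (norm_nonneg w)
    _ = 2*M/s * ‖w‖ := mul_comm _ _

/-- Local Lipschitz estimate, uniform in `k`, on a compact subset. -/
theorem lipschitz_on_compact {φ : EuclideanSpace ℂ (Fin n) → EReal}
    (husc : UpperSemicontinuousOn φ (ball 0 1))
    (htop : ∀ x ∈ ball (0 : EuclideanSpace ℂ (Fin n)) 1, φ x ≠ ⊤)
    {K : ℝ} {f : ℕ → EuclideanSpace ℂ (Fin n) → ℂ}
    (hfd : ∀ k, DifferentiableOn ℂ (f k) (ball 0 1))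
    (hfK : ∀ k, ∫⁻ x in ball (0 : EuclideanSpace ℂ (Fin n)) 1,
      ENNReal.ofReal (‖f k x‖ ^ 2) * expNeg (φ x) ≤ ENNReal.ofReal K)
    {C : Set (EuclideanSpace ℂ (Fin n))} (hCB : C ⊆ ball 0 1) (hC : IsCompact C) :
    ∃ s > 0, ∃ L ≥ 0, ∀ k, ∀ y ∈ C, ∀ y', dist y' y < s → ‖f k y' - f k y‖ ≤ L * dist y' y := by
  obtain ⟨δ, hδ, hthick⟩ := hC.exists_cthickening_subset_open isOpen_ball hCB
  have hC1 : IsCompact (cthickening δ C) := hC.cthickening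
  obtain ⟨M, hM⟩ := bound_on_compact husc htop hfd hfK hthick hC1
  rcases C.eq_empty_or_nonempty with rfl | ⟨z0, hz0⟩
  · exact ⟨1, one_pos, 0, le_rfl, fun k y hy => absurd hy (Set.notMem_empty y)⟩
  have hM0 : 0 ≤ M :=
    le_trans (norm_nonneg (f 0 z0)) (hM 0 z0 (self_subset_cthickening C hz0))
  refine ⟨δ/2, by positivity, 2*M/(δ/2), by positivity, fun k y hy y' hy' => ?_⟩
  have hsub2 : closedBall y (2*(δ/2)) ⊆ ball (0 : EuclideanSpace ℂ (Fin n)) 1 := by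
    have : (2:ℝ)*(δ/2) = δ := by ring
    rw [this]
    exact (closedBall_subset_cthickening hy δ).trans hthick
  have hMb : ∀ z ∈ closedBall y (2*(δ/2)), ‖f k z‖ ≤ M := by
    intro z hz
    have : (2:ℝ)*(δ/2) = δ := by ring
    rw [this] at hz
    exact hM k z ((closedBall_subset_cthickening hy δ) hz)
  have hfder := cauchy_deriv_bound (hfd k) (by positivity : (0:ℝ) < δ/2) hsub2 hMb
  have hconv : Convex ℝ (closedBall y (δ/2)) := convex_closedBall _ _
  have hdiff : ∀ z ∈ closedBall y (δ/2), DifferentiableAt ℂ (f k) z := by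
    intro z hz
    apply (hfd k).differentiableAt
    apply isOpen_ball.mem_nhds
    apply hsub2
    exact closedBall_subset_closedBall (by linarith) hz
  have := hconv.norm_image_sub_le_of_norm_fderiv_le hdiff hfder
    (mem_closedBall_self (by positivity)) (mem_closedBall.2 hy'.le)
  rwa [dist_eq_norm]

theorem measurable_expNeg : Measurable expNeg := by
  apply Measurable.ite (MeasurableSet.singleton ⊥) measurable_const
  exact ENNReal.measurable_ofReal.comp
    (Real.measurable_exp.comp (measurable_neg.comp measurable_ereal_toReal))

theorem weight_aemeasurable {φ : EuclideanSpace ℂ (Fin n) → EReal}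
    (husc : UpperSemicontinuousOn φ (ball 0 1)) :
    AEMeasurable (fun x => expNeg (φ x))
      (volume.restrict (ball (0 : EuclideanSpace ℂ (Fin n)) 1)) := by
  classical
  set ψ : EuclideanSpace ℂ (Fin n) → EReal :=
    fun x => if x ∈ ball (0 : EuclideanSpace ℂ (Fin n)) 1 then φ x else ⊥ with hψdef
  have hopen : ∀ r : ℝ, IsOpen {x | x ∈ ball (0 : EuclideanSpace ℂ (Fin n)) 1 ∧
      φ x < (r : EReal)} := by
    intro r
    rw [isOpen_iff_mem_nhds]
    rintro x ⟨hx, hφx⟩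
    have h1 : ∀ᶠ z in 𝓝[ball (0:EuclideanSpace ℂ (Fin n)) 1] x, φ z < (r : EReal) :=
      husc x hx r hφx
    rw [nhdsWithin_eq_nhds.2 (isOpen_ball.mem_nhds hx)] at h1
    filter_upwards [h1, isOpen_ball.mem_nhds hx] with z h1z h2z
    exact ⟨h2z, h1z⟩
  have hreal : ∀ r : ℝ, MeasurableSet (ψ ⁻¹' (Set.Iio (r : EReal))) := by
    intro r
    have : ψ ⁻¹' (Set.Iio (r : EReal)) =
        {x | x ∈ ball (0 : EuclideanSpace ℂ (Fin n)) 1 ∧ φ x < (r : EReal)} ∪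
          (ball (0 : EuclideanSpace ℂ (Fin n)) 1)ᶜ := by
      ext x
      simp only [Set.mem_preimage, Set.mem_Iio, hψdef, Set.mem_union, Set.mem_setOf_eq,
        Set.mem_compl_iff]
      split_ifs with hx
      · constructor
        · intro h; exact Or.inl ⟨hx, h⟩
        · rintro (⟨-, h⟩ | h); exact h; exact absurd hx h
      · constructor
        · intro _; exact Or.inr hx
        · intro _; exact bot_lt_iff_ne_bot.2 (by simp)
    rw [this]
    exact ((hopen r).measurableSet).union measurableSet_ball.compl
  have hψ : Measurable ψ := by
    apply measurable_of_Iio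
    intro c
    induction c using EReal.rec with
    | bot => simp
    | coe r => exact hreal r
    | top =>
      have : ψ ⁻¹' (Set.Iio (⊤ : EReal)) = ⋃ q : ℚ, ψ ⁻¹' (Set.Iio ((q:ℝ) : EReal)) := by
        ext x
        simp only [Set.mem_preimage, Set.mem_Iio, Set.mem_iUnion]
        constructor
        · intro h
          obtain ⟨r, hr1, -⟩ := EReal.exists_between_coe_real h
          obtain ⟨q, hq⟩ := exists_rat_gt r
          exact ⟨q, lt_trans hr1 (by exact_mod_cast hq)⟩
        · rintro ⟨q, hq⟩
          exact lt_of_lt_of_le hq le_top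
      rw [this]
      exact MeasurableSet.iUnion fun q => hreal q
  have hmeas : Measurable (fun x => expNeg (ψ x)) := measurable_expNeg.comp hψ
  apply hmeas.aemeasurable.congr
  filter_upwards [ae_restrict_mem measurableSet_ball] with x hx
  simp only [hψdef]
  rw [if_pos hx]

theorem montel_weighted' {n : ℕ} (φ : EuclideanSpace ℂ (Fin n) → EReal)
    (husc : UpperSemicontinuousOn φ (ball 0 1))
    (htop : ∀ x ∈ ball (0 : EuclideanSpace ℂ (Fin n)) 1, φ x ≠ ⊤) (K : ℝ) (hK : 0 ≤ K)
    (f : ℕ → EuclideanSpace ℂ (Fin n) → ℂ)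
    (hfd : ∀ k, DifferentiableOn ℂ (f k) (ball 0 1))
    (hfK : ∀ k, ∫⁻ x in ball (0 : EuclideanSpace ℂ (Fin n)) 1,
      ENNReal.ofReal (‖f k x‖ ^ 2) * expNeg (φ x) ≤ ENNReal.ofReal K) :
    ∃ (g : EuclideanSpace ℂ (Fin n) → ℂ) (ι : ℕ → ℕ), StrictMono ι ∧
      DifferentiableOn ℂ g (ball 0 1) ∧
      (∫⁻ x in ball (0 : EuclideanSpace ℂ (Fin n)) 1,
        ENNReal.ofReal (‖g x‖ ^ 2) * expNeg (φ x) ≤ ENNReal.ofReal K) ∧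
      ∀ C : Set (EuclideanSpace ℂ (Fin n)), C ⊆ ball 0 1 → IsCompact C →
        TendstoUniformlyOn (fun k => f (ι k)) g atTop C := by
  classical
  haveI : Nonempty ↥(ball (0 : EuclideanSpace ℂ (Fin n)) 1) :=
    ⟨⟨0, mem_ball_self one_pos⟩⟩
  set d : ℕ → ↥(ball (0 : EuclideanSpace ℂ (Fin n)) 1) := TopologicalSpace.denseSeq _ with hddef
  have hd : DenseRange d := TopologicalSpace.denseRange_denseSeq _
  -- pointwise bounds at the dense points
  have hsingle : ∀ m : ℕ, ∃ M : ℝ, ∀ k, ‖f k (d m : EuclideanSpace ℂ (Fin n))‖ ≤ M := by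
    intro m
    obtain ⟨M, hM⟩ := bound_on_compact husc htop hfd hfK
      (Set.singleton_subset_iff.2 (d m).2) isCompact_singleton
    exact ⟨M, fun k => hM k _ rfl⟩
  choose Md hMd using hsingle
  -- a pointwise convergent subsequence on the dense set
  set T : Set (ℕ → ℂ) := Set.univ.pi (fun m => closedBall 0 (Md m)) with hTdef
  have hT : IsCompact T := isCompact_univ_pi (fun m => isCompact_closedBall _ _)
  have hmemT : ∀ k, (fun m => f k (d m : EuclideanSpace ℂ (Fin n))) ∈ T := by
    intro k
    rw [hTdef, Set.mem_univ_pi]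
    intro m
    rw [mem_closedBall, dist_zero_right]
    exact hMd m k
  obtain ⟨g0, -, ι, hι, hconv⟩ := hT.isSeqCompact hmemT
  have hpt : ∀ m, Tendsto (fun k => f (ι k) (d m : EuclideanSpace ℂ (Fin n))) atTop (𝓝 (g0 m)) :=
    fun m => tendsto_pi_nhds.1 hconv m
  -- uniform Cauchy on compact subsets
  have hUC : ∀ C : Set (EuclideanSpace ℂ (Fin n)), C ⊆ ball 0 1 → IsCompact C →
      UniformCauchySeqOn (fun k => f (ι k)) atTop C := by
    intro C hCB hC
    rw [Metric.uniformCauchySeqOn_iff]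
    intro ε hε
    obtain ⟨s, hs, L, hL, hlip⟩ := lipschitz_on_compact husc htop hfd hfK hCB hC
    set δ : ℝ := min (s/2) (ε/(3*(L+1))) with hδdef
    have hδ0 : 0 < δ := lt_min (by linarith) (by positivity)
    have hcover : ∀ p ∈ C, ∃ m : ℕ, dist p (d m : EuclideanSpace ℂ (Fin n)) < δ := by
      intro p hp
      obtain ⟨m, hm⟩ := (Metric.denseRange_iff.1 hd) ⟨p, hCB hp⟩ δ hδ0
      exact ⟨m, by simpa [Subtype.dist_eq] using hm⟩
    choose! midx hmidx using hcover
    obtain ⟨t, htC, hcov⟩ := hC.elim_nhds_subcover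
      (fun p => ball (d (midx p) : EuclideanSpace ℂ (Fin n)) δ)
      (fun p hp => isOpen_ball.mem_nhds (by rw [mem_ball]; exact hmidx p hp))
    have hNex : ∀ p : EuclideanSpace ℂ (Fin n), ∃ N : ℕ, ∀ a ≥ N, ∀ b ≥ N,
        dist (f (ι a) (d (midx p) : EuclideanSpace ℂ (Fin n)))
          (f (ι b) (d (midx p) : EuclideanSpace ℂ (Fin n))) < ε/3 :=
      fun p => Metric.cauchySeq_iff.1 ((hpt (midx p)).cauchySeq) (ε/3) (by positivity)
    choose N hN using hNex
    refine ⟨t.sup N, fun a ha b hb x hx => ?_⟩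
    obtain ⟨p, hptm, hxp⟩ := Set.mem_iUnion₂.mp (hcov hx)
    set q : EuclideanSpace ℂ (Fin n) := (d (midx p) : EuclideanSpace ℂ (Fin n)) with hqdef
    have hdq : dist q x < δ := by rw [mem_ball, dist_comm] at hxp; exact hxp
    have hLδ : L * δ ≤ ε/3 := by
      have h1 : δ ≤ ε/(3*(L+1)) := min_le_right _ _
      have h2 : L * δ ≤ L * (ε/(3*(L+1))) := by nlinarith
      have h3 : L * (ε/(3*(L+1))) ≤ ε/3 := by
        rw [← mul_div_assoc, div_le_div_iff₀ (by positivity) (by norm_num : (0:ℝ) < 3)]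
        nlinarith
      linarith
    have hlipa : ∀ c : ℕ, dist (f c x) (f c q) ≤ ε/3 := by
      intro c
      rw [dist_comm, dist_eq_norm]
      calc ‖f c q - f c x‖ ≤ L * dist q x :=
            hlip c x hx q (lt_of_lt_of_le hdq (le_trans (min_le_left _ _) (by linarith)))
        _ ≤ L * δ := by nlinarith [dist_nonneg (x := q) (y := x)]
        _ ≤ ε/3 := hLδ
    have hmid : dist (f (ι a) q) (f (ι b) q) < ε/3 :=
      hN p a (le_trans (Finset.le_sup hptm) ha) b (le_trans (Finset.le_sup hptm) hb)
    calc dist (f (ι a) x) (f (ι b) x)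
        ≤ dist (f (ι a) x) (f (ι a) q) + dist (f (ι a) q) (f (ι b) q)
            + dist (f (ι b) q) (f (ι b) x) := dist_triangle4 _ _ _ _
      _ < ε/3 + ε/3 + ε/3 := by
          have := hlipa (ι a)
          have h2 := hlipa (ι b)
          rw [dist_comm (f (ι b) q)] at *
          linarith [hmid]
      _ = ε := by ring
  -- pointwise Cauchy and the limit function
  have hcauchy : ∀ x ∈ ball (0 : EuclideanSpace ℂ (Fin n)) 1,
      CauchySeq (fun k => f (ι k) x) := by
    intro x hx
    have h1 := hUC {x} (Set.singleton_subset_iff.2 hx) isCompact_singleton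
    rw [Metric.uniformCauchySeqOn_iff] at h1
    rw [Metric.cauchySeq_iff]
    intro ε hε
    obtain ⟨N, hN⟩ := h1 ε hε
    exact ⟨N, fun a ha b hb => hN a ha b hb x rfl⟩
  set g : EuclideanSpace ℂ (Fin n) → ℂ := fun x => limUnder atTop (fun k => f (ι k) x)
    with hgdef
  have hgt : ∀ x ∈ ball (0 : EuclideanSpace ℂ (Fin n)) 1,
      Tendsto (fun k => f (ι k) x) atTop (𝓝 (g x)) :=
    fun x hx => (hcauchy x hx).tendsto_limUnder
  have hTU : ∀ C : Set (EuclideanSpace ℂ (Fin n)), C ⊆ ball 0 1 → IsCompact C →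
      TendstoUniformlyOn (fun k => f (ι k)) g atTop C :=
    fun C hCB hC => (hUC C hCB hC).tendstoUniformlyOn_of_tendsto
      (fun x hx => hgt x (hCB hx))
  -- differentiability of g
  have hgd : DifferentiableOn ℂ g (ball 0 1) := by
    intro x₀ hx₀
    obtain ⟨ρ', hρ', hρsub⟩ := Metric.isOpen_iff.1 isOpen_ball x₀ hx₀
    set ρ : ℝ := ρ'/3 with hρdef
    have hρ0 : 0 < ρ := by positivity
    have hsub2 : closedBall x₀ (2*ρ) ⊆ ball (0 : EuclideanSpace ℂ (Fin n)) 1 := by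
      refine subset_trans ?_ hρsub
      intro z hz
      rw [mem_closedBall] at hz
      rw [mem_ball]
      calc dist z x₀ ≤ 2*ρ := hz
        _ < ρ' := by rw [hρdef]; linarith
    have hballsub : ball x₀ ρ ⊆ ball (0 : EuclideanSpace ℂ (Fin n)) 1 :=
      (ball_subset_closedBall.trans (closedBall_subset_closedBall (by linarith))).trans hsub2
    -- uniform Cauchy of the derivatives
    have hUCd : UniformCauchySeqOn (fun k y => fderiv ℂ (f (ι k)) y) atTop
        (closedBall x₀ ρ) := by
      rw [Metric.uniformCauchySeqOn_iff]
      intro ε hε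
      have h1 := hUC (closedBall x₀ (2*ρ)) hsub2 (isCompact_closedBall _ _)
      rw [Metric.uniformCauchySeqOn_iff] at h1
      obtain ⟨N, hN⟩ := h1 (ε*ρ/4) (by positivity)
      refine ⟨N, fun a ha b hb y hy => ?_⟩
      have hdiffu : DifferentiableOn ℂ (fun z => f (ι a) z - f (ι b) z) (ball 0 1) :=
        (hfd (ι a)).sub (hfd (ι b))
      have hub : ∀ z ∈ closedBall x₀ (2*ρ), ‖f (ι a) z - f (ι b) z‖ ≤ ε*ρ/4 := by
        intro z hz
        rw [← dist_eq_norm]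
        exact (hN a ha b hb z hz).le
      have hder := cauchy_deriv_bound hdiffu hρ0 hsub2 hub y hy
      have hfa : DifferentiableAt ℂ (f (ι a)) y := (hfd (ι a)).differentiableAt
        (isOpen_ball.mem_nhds (hsub2 (closedBall_subset_closedBall (by linarith) hy)))
      have hfb : DifferentiableAt ℂ (f (ι b)) y := (hfd (ι b)).differentiableAt
        (isOpen_ball.mem_nhds (hsub2 (closedBall_subset_closedBall (by linarith) hy)))
      rw [fderiv_fun_sub hfa hfb] at hder
      rw [dist_eq_norm]
      calc ‖fderiv ℂ (f (ι a)) y - fderiv ℂ (f (ι b)) y‖ ≤ 2*(ε*ρ/4)/ρ := hder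
        _ = ε/2 := by field_simp; ring
        _ < ε := by linarith
    have hcauchyd : ∀ y ∈ closedBall x₀ ρ, CauchySeq (fun k => fderiv ℂ (f (ι k)) y) := by
      intro y hy
      rw [Metric.uniformCauchySeqOn_iff] at hUCd
      rw [Metric.cauchySeq_iff]
      intro ε hε
      obtain ⟨N, hN⟩ := hUCd ε hε
      exact ⟨N, fun a ha b hb => hN a ha b hb y hy⟩
    set h' : EuclideanSpace ℂ (Fin n) → (EuclideanSpace ℂ (Fin n) →L[ℂ] ℂ) :=
      fun y => limUnder atTop (fun k => fderiv ℂ (f (ι k)) y) with hh'def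
    have hTUd : TendstoUniformlyOn (fun k y => fderiv ℂ (f (ι k)) y) h' atTop (ball x₀ ρ) :=
      (hUCd.mono ball_subset_closedBall).tendstoUniformlyOn_of_tendsto
        (fun y hy => (hcauchyd y (ball_subset_closedBall hy)).tendsto_limUnder)
    have hHD := hasFDerivAt_of_tendstoUniformlyOn isOpen_ball hTUd
      (fun k y hy => ((hfd (ι k)).differentiableAt
        (isOpen_ball.mem_nhds (hballsub hy))).hasFDerivAt)
      (fun y hy => hgt y (hballsub hy)) (mem_ball_self hρ0)
    exact hHD.differentiableAt.differentiableWithinAt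
  -- the integral bound on g, via Fatou
  have hgK : ∫⁻ x in ball (0 : EuclideanSpace ℂ (Fin n)) 1,
      ENNReal.ofReal (‖g x‖ ^ 2) * expNeg (φ x) ≤ ENNReal.ofReal K := by
    have hwm := weight_aemeasurable husc
    have hfm : ∀ k, AEMeasurable
        (fun x => ENNReal.ofReal (‖f (ι k) x‖ ^ 2) * expNeg (φ x))
        (volume.restrict (ball (0 : EuclideanSpace ℂ (Fin n)) 1)) := by
      intro k
      refine AEMeasurable.mul ?_ hwm
      have h1 : AEMeasurable (f (ι k))
          (volume.restrict (ball (0 : EuclideanSpace ℂ (Fin n)) 1)) :=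
        (hfd (ι k)).continuousOn.aemeasurable measurableSet_ball
      have h2 : Measurable (fun z : ℂ => ENNReal.ofReal (‖z‖ ^ 2)) :=
        ENNReal.measurable_ofReal.comp (measurable_norm.pow_const 2)
      exact h2.comp_aemeasurable h1
    have hptle : ∀ᵐ x ∂(volume.restrict (ball (0 : EuclideanSpace ℂ (Fin n)) 1)),
        ENNReal.ofReal (‖g x‖ ^ 2) * expNeg (φ x) ≤
          Filter.liminf (fun k => ENNReal.ofReal (‖f (ι k) x‖ ^ 2) * expNeg (φ x)) atTop := by
      filter_upwards [ae_restrict_mem measurableSet_ball] with x hx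
      have htd : Tendsto (fun k => ENNReal.ofReal (‖f (ι k) x‖ ^ 2)) atTop
          (𝓝 (ENNReal.ofReal (‖g x‖ ^ 2))) :=
        (ENNReal.continuous_ofReal.tendsto _).comp (((hgt x hx).norm).pow 2)
      rcases eq_or_ne (expNeg (φ x)) ⊤ with hc | hc
      · rcases eq_or_ne (ENNReal.ofReal (‖g x‖ ^ 2)) 0 with h0 | h0
        · rw [h0, zero_mul]; exact zero_le
        · have hev : ∀ᶠ k in atTop, 0 < ENNReal.ofReal (‖f (ι k) x‖ ^ 2) :=
            Filter.Tendsto.eventually_const_lt (pos_iff_ne_zero.2 h0) htd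
          apply Filter.le_liminf_of_le
          · isBoundedDefault
          filter_upwards [hev] with k hk
          rw [hc, ENNReal.mul_top hk.ne']
          exact le_top
      · have := ENNReal.Tendsto.mul_const htd (Or.inr hc)
        rw [← this.liminf_eq]
    calc ∫⁻ x in ball (0 : EuclideanSpace ℂ (Fin n)) 1,
          ENNReal.ofReal (‖g x‖ ^ 2) * expNeg (φ x)
        ≤ ∫⁻ x in ball (0 : EuclideanSpace ℂ (Fin n)) 1,
            Filter.liminf (fun k => ENNReal.ofReal (‖f (ι k) x‖ ^ 2) * expNeg (φ x)) atTop :=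
          lintegral_mono_ae hptle
      _ ≤ Filter.liminf (fun k => ∫⁻ x in ball (0 : EuclideanSpace ℂ (Fin n)) 1,
            ENNReal.ofReal (‖f (ι k) x‖ ^ 2) * expNeg (φ x)) atTop :=
          lintegral_liminf_le' hfm
      _ ≤ Filter.liminf (fun _ : ℕ => ENNReal.ofReal K) atTop :=
          Filter.liminf_le_liminf (Filter.Eventually.of_forall (fun k => hfK (ι k)))
      _ = ENNReal.ofReal K := Filter.liminf_const _
  exact ⟨g, ι, hι, hgd, hgK, hTU⟩

end Aux


/-- Let `φ` be plurisubharmonic on the open unit ball `B ⊆ ℂⁿ` and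
`K ≥ 0`. Every sequence of holomorphic functions `f_k : B → ℂ` with
`∫_B |f_k|² e^{-φ} dλ ≤ K` has a subsequence converging uniformly on every compact subset
of `B` to a holomorphic function satisfying the same bound. -/
theorem montel_weighted {n : ℕ} (φ : EuclideanSpace ℂ (Fin n) → EReal)
    (hφ : PshOn (ball (0 : EuclideanSpace ℂ (Fin n)) 1) φ) (K : ℝ) (hK : 0 ≤ K)
    (f : ℕ → EuclideanSpace ℂ (Fin n) → ℂ)
    (hfd : ∀ k, DifferentiableOn ℂ (f k) (ball 0 1))
    (hfK : ∀ k, ∫⁻ x in ball (0 : EuclideanSpace ℂ (Fin n)) 1,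
      ENNReal.ofReal (‖f k x‖ ^ 2) * expNeg (φ x) ≤ ENNReal.ofReal K) :
    ∃ (g : EuclideanSpace ℂ (Fin n) → ℂ) (ι : ℕ → ℕ), StrictMono ι ∧
      DifferentiableOn ℂ g (ball 0 1) ∧
      (∫⁻ x in ball (0 : EuclideanSpace ℂ (Fin n)) 1,
        ENNReal.ofReal (‖g x‖ ^ 2) * expNeg (φ x) ≤ ENNReal.ofReal K) ∧
      ∀ C : Set (EuclideanSpace ℂ (Fin n)), C ⊆ ball 0 1 → IsCompact C →
        TendstoUniformlyOn (fun k => f (ι k)) g atTop C :=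
  montel_weighted' φ hφ.usc hφ.ne_top K hK f hfd hfK
end
end

section
/- Let h be a singular hermitian inner product on a finite-dimensional complex vector space V which is positive definite or finite, and let h* be the dual function on V*. Then for every linear functional f ∈ V*: |f|_{h*} = 0 if and only if f vanishes on V_fin, and |f|_{h*} < +∞ if and only if f vanishes on V₀. -/
noncomputable section

open MeasureTheory ENNReal Metric Complex Filter Classical

/-- A singular hermitian inner product on a complex vector space `V`: a length function
`V → [0,+∞]` satisfying homogeneity, the triangle inequality and the parallelogram law. -/
structure SingularHermitianInnerProduct (V : Type*) [AddCommGroup V] [Module ℂ V] where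
  norm : V → ℝ≥0∞
  norm_zero : norm 0 = 0
  norm_smul : ∀ c : ℂ, c ≠ 0 → ∀ v : V, norm (c • v) = ENNReal.ofReal ‖c‖ * norm v
  triangle : ∀ v w : V, norm (v + w) ≤ norm v + norm w
  parallelogram : ∀ v w : V,
    norm (v + w) ^ 2 + norm (v - w) ^ 2 = 2 * norm v ^ 2 + 2 * norm w ^ 2

namespace SingularHermitianInnerProduct

variable {V : Type*} [AddCommGroup V] [Module ℂ V]

/-- `h` is positive definite if only `0` has length zero. -/
def PosDef (h : SingularHermitianInnerProduct V) : Prop := ∀ v : V, h.norm v = 0 → v = 0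

/-- `h` is finite if no vector has infinite length. -/
def Finite (h : SingularHermitianInnerProduct V) : Prop := ∀ v : V, h.norm v ≠ ⊤

/-- The dual length function on linear functionals (evaluated here on plain functions):
`|f|_{h*} = sup { |f v| / |v|_h : |v|_h ≠ 0 }`, where a fraction with denominator `+∞` is
zero, and with the convention that if every vector has length `0` then `|f|_{h*}` is `0`
for `f = 0` and `+∞` otherwise. -/
def dualNorm (h : SingularHermitianInnerProduct V) (f : V → ℂ) : ℝ≥0∞ :=
  if ∀ v : V, h.norm v = 0 then (if ∀ v : V, f v = 0 then 0 else ⊤)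
  else ⨆ v : {v : V // h.norm v ≠ 0}, ENNReal.ofReal ‖f v.1‖ / h.norm v.1

end SingularHermitianInnerProduct

open SingularHermitianInnerProduct

section Aux

variable {V : Type*} [AddCommGroup V] [Module ℂ V]

lemma SHIP.norm_neg (h : SingularHermitianInnerProduct V) (v : V) :
    h.norm (-v) = h.norm v := by
  have := h.norm_smul (-1) (by norm_num) v
  simpa using this

lemma SHIP.norm_add_zero (h : SingularHermitianInnerProduct V) (w v : V)
    (hv : h.norm v = 0) : h.norm (w + v) = h.norm w := by
  apply le_antisymm
  · calc h.norm (w + v) ≤ h.norm w + h.norm v := h.triangle _ _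
      _ = h.norm w := by rw [hv, add_zero]
  · have h2 := h.triangle (w + v) (-v)
    rw [add_neg_cancel_right, SHIP.norm_neg, hv, add_zero] at h2
    exact h2

/-- The subspace of vectors of zero length. -/
def SHIP.zeroSub (h : SingularHermitianInnerProduct V) : Submodule ℂ V where
  carrier := {v | h.norm v = 0}
  zero_mem' := h.norm_zero
  add_mem' := by
    intro a b ha hb
    have := h.triangle a b
    rw [ha, hb, add_zero] at this
    exact le_zero_iff.mp this
  smul_mem' := by
    intro c v hv
    show h.norm (c • v) = 0
    rcases eq_or_ne c 0 with rfl | hc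
    · simpa using h.norm_zero
    · rw [h.norm_smul c hc, show h.norm v = 0 from hv, mul_zero]

/-- The subspace of vectors of finite length. -/
def SHIP.finSub (h : SingularHermitianInnerProduct V) : Submodule ℂ V where
  carrier := {v | h.norm v ≠ ⊤}
  zero_mem' := by simp [h.norm_zero]
  add_mem' := by
    intro a b ha hb
    exact ne_top_of_le_ne_top (ENNReal.add_ne_top.mpr ⟨ha, hb⟩) (h.triangle a b)
  smul_mem' := by
    intro c v hv
    show h.norm (c • v) ≠ ⊤
    rcases eq_or_ne c 0 with rfl | hc
    · simp [h.norm_zero]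
    · rw [h.norm_smul c hc]
      exact ENNReal.mul_ne_top ENNReal.ofReal_ne_top hv

set_option synthInstance.maxHeartbeats 1000000 in
set_option maxHeartbeats 1000000 in
lemma SHIP.exists_bound [FiniteDimensional ℂ V] (h : SingularHermitianInnerProduct V)
    (f : V →ₗ[ℂ] ℂ) (hf : ∀ v : V, h.norm v = 0 → f v = 0) :
    ∃ C : ℝ, 0 ≤ C ∧ ∀ v : V, h.norm v ≠ ⊤ → ‖f v‖ ≤ C * (h.norm v).toReal := by
  set W : Submodule ℂ V := SHIP.finSub h with hW
  set Z : Submodule ℂ ↥W := (SHIP.zeroSub h).comap W.subtype with hZ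
  obtain ⟨U, hU⟩ := Submodule.exists_isCompl Z
  -- a genuine norm on U
  let n : AddGroupNorm ↥U :=
    { toFun := fun u => (h.norm (u.1 : V)).toReal
      map_zero' := by simp [h.norm_zero]
      add_le' := by
        intro a b
        have h1 : h.norm ((a.1 : V) + (b.1 : V)) ≤ h.norm (a.1 : V) + h.norm (b.1 : V) :=
          h.triangle _ _
        have ha : h.norm (a.1 : V) ≠ ⊤ := a.1.2
        have hb : h.norm (b.1 : V) ≠ ⊤ := b.1.2
        have h2 : ((h.norm ((a.1 : V) + (b.1 : V)))).toReal ≤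
            (h.norm (a.1 : V) + h.norm (b.1 : V)).toReal := by
          exact ENNReal.toReal_mono (ENNReal.add_ne_top.mpr ⟨ha, hb⟩) h1
        rw [ENNReal.toReal_add ha hb] at h2
        exact h2
      neg' := by
        intro a
        rw [show ((-a).1 : V) = -(a.1 : V) from rfl, SHIP.norm_neg]
      eq_zero_of_map_eq_zero' := by
        intro a ha
        have hfin : h.norm (a.1 : V) ≠ ⊤ := a.1.2
        have h0 : h.norm (a.1 : V) = 0 := by
          rcases ENNReal.toReal_eq_zero_iff _ |>.mp ha with h' | h'
          · exact h'
          · exact absurd h' hfin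
        have hZmem : a.1 ∈ Z := h0
        have := Submodule.disjoint_def.mp hU.disjoint a.1 hZmem a.2
        exact Subtype.ext this }
  letI : NormedAddCommGroup ↥U := n.toNormedAddCommGroup
  letI : NormedSpace ℂ ↥U := by
    refine ⟨fun c u => ?_⟩
    rcases eq_or_ne c 0 with rfl | hc
    · rw [zero_smul, _root_.norm_zero]
      positivity
    · have : ((c • u).1 : V) = c • (u.1 : V) := rfl
      show (h.norm (((c • u).1 : V))).toReal ≤ ‖c‖ * (h.norm (u.1 : V)).toReal
      rw [this, h.norm_smul c hc, ENNReal.toReal_mul, ENNReal.toReal_ofReal (norm_nonneg c)]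
  let g : ↥U →ₗ[ℂ] ℂ := f.comp (W.subtype.comp U.subtype)
  let G := LinearMap.toContinuousLinearMap g
  refine ⟨‖G‖, norm_nonneg _, ?_⟩
  intro v hv
  have hvW : v ∈ W := hv
  obtain ⟨z, hz, u, hu, hzu⟩ := Submodule.mem_sup.mp
    (by rw [hU.sup_eq_top]; trivial : (⟨v, hvW⟩ : ↥W) ∈ Z ⊔ U)
  have hzV : h.norm (z : V) = 0 := hz
  have hsum : (z : V) + (u : V) = v := congrArg Subtype.val hzu
  have hfv : f v = f (u : V) := by
    rw [← hsum, map_add, hf _ hzV, zero_add]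
  have hnv : h.norm v = h.norm (u : V) := by
    rw [← hsum, add_comm, SHIP.norm_add_zero _ _ _ hzV]
  have hb := G.le_opNorm ⟨u, hu⟩
  have hGu : G ⟨u, hu⟩ = f (u : V) := by
    have hc : (G : ↥U →ₗ[ℂ] ℂ) = g := LinearMap.coe_toContinuousLinearMap g
    have h2 := DFunLike.congr_fun hc (⟨u, hu⟩ : ↥U)
    exact h2
  have hnormu : ‖(⟨u, hu⟩ : ↥U)‖ = (h.norm (u : V)).toReal := rfl
  rw [hfv, hnv]
  calc ‖f (u : V)‖ = ‖G ⟨u, hu⟩‖ := by rw [hGu]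
    _ ≤ ‖G‖ * ‖(⟨u, hu⟩ : ↥U)‖ := hb
    _ = ‖G‖ * (h.norm (u : V)).toReal := by rw [hnormu]

end Aux

/-- Let `h` be a singular hermitian inner product, positive definite or
finite, on a finite-dimensional complex vector space `V`. For a linear functional
`f : V → ℂ`: `|f|_{h*} = 0` iff `f` vanishes on `V_fin`, and `|f|_{h*} < +∞` iff `f`
vanishes on `V₀`. -/
theorem dualNorm_zero_iff_and_ne_top_iff {V : Type*} [AddCommGroup V] [Module ℂ V]
    [FiniteDimensional ℂ V] (h : SingularHermitianInnerProduct V)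
    (hh : h.PosDef ∨ h.Finite) (f : V →ₗ[ℂ] ℂ) :
    (h.dualNorm f = 0 ↔ ∀ v : V, h.norm v ≠ ⊤ → f v = 0) ∧
    (h.dualNorm f ≠ ⊤ ↔ ∀ v : V, h.norm v = 0 → f v = 0) := by
  by_cases hA : ∀ v : V, h.norm v = 0
  · rw [dualNorm, if_pos hA]
    by_cases hf : ∀ v : V, (f : V → ℂ) v = 0
    · rw [if_pos hf]
      refine ⟨⟨fun _ v _ => hf v, fun _ => rfl⟩, ⟨fun _ v _ => hf v, fun _ => ?_⟩⟩
      simp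
    · rw [if_neg hf]
      push_neg at hf
      obtain ⟨v, hv⟩ := hf
      constructor
      · constructor
        · intro h0; exact absurd h0 (by simp)
        · intro H; exact absurd (H v (by rw [hA v]; exact ENNReal.zero_ne_top)) hv
      · constructor
        · intro h0; exact absurd rfl h0
        · intro H; exact absurd (H v (hA v)) hv
  · rw [dualNorm, if_neg hA]
    push_neg at hA
    obtain ⟨w₀, hw₀⟩ := hA
    set S := ⨆ v : {v : V // h.norm v ≠ 0}, ENNReal.ofReal ‖f v.1‖ / h.norm v.1 with hSdef
    constructor
    · rw [hSdef, ENNReal.iSup_eq_zero]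
      constructor
      · intro hz v hv
        rcases eq_or_ne (h.norm v) 0 with h0 | h0
        · rcases hh with hp | hfin
          · rw [hp v h0]; exact map_zero f
          · have hwv : h.norm (w₀ + v) = h.norm w₀ := SHIP.norm_add_zero h w₀ v h0
            have h1 := hz ⟨w₀ + v, by rw [hwv]; exact hw₀⟩
            have h2 := hz ⟨w₀, hw₀⟩
            rcases ENNReal.div_eq_zero_iff.mp h1 with h1' | h1'
            · rcases ENNReal.div_eq_zero_iff.mp h2 with h2' | h2'
              · have e1 : f (w₀ + v) = 0 :=
                  norm_le_zero_iff.mp (ENNReal.ofReal_eq_zero.mp h1')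
                have e2 : f w₀ = 0 :=
                  norm_le_zero_iff.mp (ENNReal.ofReal_eq_zero.mp h2')
                have e3 := map_add f w₀ v
                rw [e1, e2, zero_add] at e3
                exact e3.symm
              · exact absurd h2' (hfin w₀)
            · rw [hwv] at h1'
              exact absurd h1' (hfin w₀)
        · have h1 := hz ⟨v, h0⟩
          rcases ENNReal.div_eq_zero_iff.mp h1 with h1' | h1'
          · exact norm_le_zero_iff.mp (ENNReal.ofReal_eq_zero.mp h1')
          · exact absurd h1' hv
      · rintro H ⟨v, hv⟩
        rcases eq_or_ne (h.norm v) ⊤ with ht | ht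
        · rw [ht]; simp
        · rw [H v ht]
          simp
    · constructor
      · intro hne v hv0
        rcases hh with hp | hfin
        · rw [hp v hv0]; exact map_zero f
        · by_contra hfv
          have hD : h.norm w₀ ≠ ⊤ := hfin w₀
          have hKne : S * h.norm w₀ ≠ ⊤ := ENNReal.mul_ne_top hne hD
          set K := (S * h.norm w₀).toReal with hK
          have hbound : ∀ m : ℕ, ‖f w₀ + (m : ℂ) * f v‖ ≤ K := by
            intro m
            have hm0 : h.norm ((m : ℂ) • v) = 0 :=
              Submodule.smul_mem (SHIP.zeroSub h) (m : ℂ) (show v ∈ SHIP.zeroSub h from hv0)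
            have hwm : h.norm (w₀ + (m : ℂ) • v) = h.norm w₀ :=
              SHIP.norm_add_zero h w₀ _ hm0
            have hle : ENNReal.ofReal ‖f (w₀ + (m : ℂ) • v)‖ / h.norm (w₀ + (m : ℂ) • v) ≤ S :=
              le_iSup (fun v : {v : V // h.norm v ≠ 0} =>
                ENNReal.ofReal ‖f v.1‖ / h.norm v.1) ⟨w₀ + (m : ℂ) • v, by rw [hwm]; exact hw₀⟩
            rw [hwm, ENNReal.div_le_iff hw₀ hD] at hle
            have := (ENNReal.ofReal_le_iff_le_toReal hKne).mp hle
            rwa [map_add, f.map_smul, smul_eq_mul] at this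
          have hpos : 0 < ‖f v‖ := norm_pos_iff.mpr hfv
          obtain ⟨m, hm⟩ := exists_nat_gt ((K + ‖f w₀‖) / ‖f v‖)
          have hgt : K + ‖f w₀‖ < (m : ℝ) * ‖f v‖ := (div_lt_iff₀ hpos).mp hm
          have h1 : (m : ℝ) * ‖f v‖ ≤ K + ‖f w₀‖ := by
            calc (m : ℝ) * ‖f v‖ = ‖(m : ℂ) * f v‖ := by
                  rw [norm_mul, Complex.norm_natCast]
              _ = ‖(f w₀ + (m : ℂ) * f v) + (-(f w₀))‖ := by congr 1; ring
              _ ≤ ‖f w₀ + (m : ℂ) * f v‖ + ‖-(f w₀)‖ := norm_add_le _ _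
              _ = ‖f w₀ + (m : ℂ) * f v‖ + ‖f w₀‖ := by rw [norm_neg]
              _ ≤ K + ‖f w₀‖ := by linarith [hbound m]
          linarith
      · intro H
        obtain ⟨C, hC0, hC⟩ := SHIP.exists_bound h f H
        have hle : S ≤ ENNReal.ofReal C := by
          rw [hSdef]
          refine iSup_le ?_
          rintro ⟨v, hv⟩
          rcases eq_or_ne (h.norm v) ⊤ with ht | ht
          · rw [ht]; simp
          · rw [ENNReal.div_le_iff hv ht]
            calc ENNReal.ofReal ‖f v‖ ≤ ENNReal.ofReal (C * (h.norm v).toReal) :=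
                ENNReal.ofReal_le_ofReal (hC v ht)
              _ = ENNReal.ofReal C * ENNReal.ofReal ((h.norm v).toReal) :=
                ENNReal.ofReal_mul hC0
              _ = ENNReal.ofReal C * h.norm v := by rw [ENNReal.ofReal_toReal ht]
        exact ne_top_of_le_ne_top ENNReal.ofReal_ne_top hle
end
end

section
/- Let h be a singular hermitian inner product on a finite-dimensional complex vector space V. Then the dual function h* is again a singular hermitian inner product on the dual space V* = Hom_ℂ(V,ℂ), i.e. |·|_{h*} satisfies the homogeneity property, the triangle inequality, and the parallelogram law (with values in [0,+∞]). -/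
noncomputable section

open MeasureTheory ENNReal Metric Complex Filter Classical

open SingularHermitianInnerProduct

/-!
If some vector has finite nonzero length, a functional of finite dual norm vanishes on the null
space `V₀`: otherwise translating a vector along `V₀` keeps its length and makes `|f v|`
arbitrarily large. Such a functional only sees a complement `U` of `V₀` in `V_fin`, on which `h`
is a genuine norm satisfying the parallelogram law, i.e. a Hilbert norm (Jordan–von Neumann);
by the Riesz representation theorem the dual of a finite-dimensional Hilbert space is again
Hilbert, so the dual norm satisfies the parallelogram law. If no vector has finite nonzero
length, every finite dual norm is `0`. Infinite values are harmless: by homogeneity and the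
triangle inequality both sides of the parallelogram law are `⊤` once `f` or `g` has infinite
dual norm.
-/

theorem ENNReal.ofReal_parallelogram_iff {a b c d : ℝ} (ha : 0 ≤ a) (hb : 0 ≤ b) (hc : 0 ≤ c)
    (hd : 0 ≤ d) :
    ENNReal.ofReal a ^ 2 + ENNReal.ofReal b ^ 2 =
        2 * ENNReal.ofReal c ^ 2 + 2 * ENNReal.ofReal d ^ 2 ↔
      a ^ 2 + b ^ 2 = 2 * c ^ 2 + 2 * d ^ 2 := by
  rw [← ofReal_pow ha, ← ofReal_pow hb, ← ofReal_pow hc, ← ofReal_pow hd,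
    ← ENNReal.ofReal_ofNat 2, ← ofReal_mul zero_le_two, ← ofReal_mul zero_le_two,
    ← ofReal_add (by positivity) (by positivity), ← ofReal_add (by positivity) (by positivity),
    ofReal_eq_ofReal_iff (by positivity) (by positivity)]

theorem StrongDual.enorm_parallelogram {𝕜 E : Type*} [RCLike 𝕜] [NormedAddCommGroup E]
    [InnerProductSpace 𝕜 E] [CompleteSpace E] (f g : StrongDual 𝕜 E) :
    ‖f + g‖ₑ ^ 2 + ‖f - g‖ₑ ^ 2 = 2 * ‖f‖ₑ ^ 2 + 2 * ‖g‖ₑ ^ 2 := by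
  simp only [← ofReal_norm]
  rw [ENNReal.ofReal_parallelogram_iff (norm_nonneg _) (norm_nonneg _) (norm_nonneg _)
    (norm_nonneg _)]
  set T := (InnerProductSpace.toDual 𝕜 E).symm
  have hT := parallelogram_law_with_norm 𝕜 (T f) (T g)
  rw [← map_add, ← map_sub, T.norm_map, T.norm_map, T.norm_map, T.norm_map] at hT
  linear_combination hT

theorem ContinuousLinearMap.iSup_enorm_apply_div_enorm {𝕜 𝕜₂ E F : Type*}
    [NontriviallyNormedField 𝕜] [NontriviallyNormedField 𝕜₂] {σ : 𝕜 →+* 𝕜₂}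
    [RingHomIsometric σ] [SeminormedAddCommGroup E] [SeminormedAddCommGroup F]
    [NormedSpace 𝕜 E] [NormedSpace 𝕜₂ F] (f : E →SL[σ] F) :
    ⨆ v : {v : E // ‖v‖ₑ ≠ 0}, ‖f v.1‖ₑ / ‖v.1‖ₑ = ‖f‖ₑ := by
  refine le_antisymm (iSup_le fun v => ENNReal.div_le_of_le_mul (f.le_opENorm v)) ?_
  refine f.opENorm_le_bound fun v => ?_
  by_cases hv : ‖v‖ₑ = 0
  · simpa [hv] using f.le_opENorm v
  · rw [← ENNReal.div_le_iff hv enorm_ne_top]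
    exact le_iSup (fun v : {v : E // ‖v‖ₑ ≠ 0} => ‖f v.1‖ₑ / ‖v.1‖ₑ) ⟨v, hv⟩

theorem parallelogram_of_ne_top {W : Type*} [AddCommGroup W] [Module ℂ W] {N : W → ℝ≥0∞}
    (norm_smul : ∀ c : ℂ, c ≠ 0 → ∀ w, N (c • w) = ENNReal.ofReal ‖c‖ * N w)
    (triangle : ∀ v w, N (v + w) ≤ N v + N w)
    (hfin : ∀ v w, N v ≠ ⊤ → N w ≠ ⊤ → N (v + w) ≠ ⊤ → N (v - w) ≠ ⊤ →
      N (v + w) ^ 2 + N (v - w) ^ 2 = 2 * N v ^ 2 + 2 * N w ^ 2)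
    (v w : W) : N (v + w) ^ 2 + N (v - w) ^ 2 = 2 * N v ^ 2 + 2 * N w ^ 2 := by
  have norm_neg (x : W) : N (-x) = N x := by simpa using norm_smul (-1) (by norm_num) x
  have norm_sub_le (x y : W) : N (x - y) ≤ N x + N y := by
    simpa [sub_eq_add_neg, norm_neg] using triangle x (-y)
  have norm_two_smul (x : W) : N ((2 : ℂ) • x) = 2 * N x := by
    simpa using norm_smul 2 two_ne_zero x
  have hv : 2 * N v ≤ N (v + w) + N (v - w) := by
    rw [← norm_two_smul, show (2 : ℂ) • v = (v + w) + (v - w) by module]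
    exact triangle _ _
  have hw : 2 * N w ≤ N (v + w) + N (v - w) := by
    rw [← norm_two_smul, show (2 : ℂ) • w = (v + w) - (v - w) by module]
    exact norm_sub_le _ _
  by_cases htop : N v = ⊤ ∨ N w = ⊤
  · have hsum : N (v + w) + N (v - w) = ⊤ := by
      rcases htop with h | h
      · exact top_unique (by simpa [h] using hv)
      · exact top_unique (by simpa [h] using hw)
    have hlhs : N (v + w) ^ 2 + N (v - w) ^ 2 = ⊤ := by
      rcases ENNReal.add_eq_top.1 hsum with h | h <;> simp [h]
    have hrhs : 2 * N v ^ 2 + 2 * N w ^ 2 = ⊤ := by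
      rcases htop with h | h <;> simp [h]
    rw [hlhs, hrhs]
  push Not at htop
  exact hfin v w htop.1 htop.2
    (ne_top_of_le_ne_top (by simp [htop]) (triangle v w))
    (ne_top_of_le_ne_top (by simp [htop]) (norm_sub_le v w))

namespace SingularHermitianInnerProduct

variable {V W : Type*} [AddCommGroup V] [Module ℂ V] [AddCommGroup W] [Module ℂ W]
  (h : SingularHermitianInnerProduct V)

theorem norm_neg (v : V) : h.norm (-v) = h.norm v := by
  simpa using h.norm_smul (-1) (by norm_num) v

theorem norm_add_of_norm_eq_zero {z : V} (hz : h.norm z = 0) (v : V) :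
    h.norm (v + z) = h.norm v :=
  le_antisymm (by simpa [hz] using h.triangle v z)
    (by simpa [h.norm_neg, hz] using h.triangle (v + z) (-z))

def nullSubmodule : Submodule ℂ V where
  carrier := {v | h.norm v = 0}
  zero_mem' := h.norm_zero
  add_mem' {v w} (hv : h.norm v = 0) (hw : h.norm w = 0) :=
    le_antisymm ((h.triangle v w).trans (by simp [hv, hw])) zero_le
  smul_mem' c v hv := by
    rcases eq_or_ne c 0 with rfl | hc
    · simpa using h.norm_zero
    · simp_all [h.norm_smul c hc]

def finiteSubmodule : Submodule ℂ V where
  carrier := {v | h.norm v ≠ ⊤}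
  zero_mem' := by simp [h.norm_zero]
  add_mem' {v w} hv hw := ne_top_of_le_ne_top (by simp_all) (h.triangle v w)
  smul_mem' c v hv := by
    rcases eq_or_ne c 0 with rfl | hc
    · simp [h.norm_zero]
    · exact (h.norm_smul c hc v).trans_ne (ENNReal.mul_ne_top ofReal_ne_top hv)

theorem nullSubmodule_le_finiteSubmodule : h.nullSubmodule ≤ h.finiteSubmodule :=
  fun v (hv : h.norm v = 0) => show h.norm v ≠ ⊤ by simp [hv]

def comap (L : W →ₗ[ℂ] V) : SingularHermitianInnerProduct W where
  norm w := h.norm (L w)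
  norm_zero := by simp [h.norm_zero]
  norm_smul c hc w := by simp [h.norm_smul c hc]
  triangle v w := by simpa using h.triangle (L v) (L w)
  parallelogram v w := by simpa using h.parallelogram (L v) (L w)

theorem comap_subtype_posDef {U : Submodule ℂ V} (hU : Disjoint h.nullSubmodule U) :
    (h.comap U.subtype).PosDef := fun u hu =>
  Subtype.ext (Submodule.disjoint_def.1 hU u hu u.2)

theorem comap_subtype_finite {U : Submodule ℂ V} (hU : U ≤ h.finiteSubmodule) :
    (h.comap U.subtype).Finite := fun u => hU u.2

def supRatio (f : V → ℂ) : ℝ≥0∞ :=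
  ⨆ v : {v : V // h.norm v ≠ 0}, ENNReal.ofReal ‖f v.1‖ / h.norm v.1

theorem le_supRatio {v : V} (hv : h.norm v ≠ 0) (f : V → ℂ) :
    ENNReal.ofReal ‖f v‖ / h.norm v ≤ h.supRatio f :=
  le_iSup (fun v : {v : V // h.norm v ≠ 0} => ENNReal.ofReal ‖f v.1‖ / h.norm v.1) ⟨v, hv⟩

theorem supRatio_smul (c : ℂ) (f : V → ℂ) :
    h.supRatio (c • f) = ENNReal.ofReal ‖c‖ * h.supRatio f := by
  simp only [supRatio, ENNReal.mul_iSup, Pi.smul_apply, smul_eq_mul, norm_mul,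
    ENNReal.ofReal_mul (norm_nonneg c), mul_div_assoc]

theorem supRatio_add_le (f g : V → ℂ) : h.supRatio (f + g) ≤ h.supRatio f + h.supRatio g :=
  iSup_le fun v => calc
    ENNReal.ofReal ‖(f + g) v.1‖ / h.norm v.1
        ≤ (ENNReal.ofReal ‖f v.1‖ + ENNReal.ofReal ‖g v.1‖) / h.norm v.1 := by
      gcongr
      simpa only [Pi.add_apply, ofReal_norm] using enorm_add_le (f v.1) (g v.1)
    _ = _ := ENNReal.add_div
    _ ≤ _ := add_le_add (h.le_supRatio v.2 f) (h.le_supRatio v.2 g)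

theorem dualNorm_of_forall (hall : ∀ v, h.norm v = 0) (f : V → ℂ) :
    h.dualNorm f = if ∀ v, f v = 0 then 0 else ⊤ :=
  if_pos hall

theorem dualNorm_of_not_forall (hall : ¬ ∀ v, h.norm v = 0) (f : V → ℂ) :
    h.dualNorm f = h.supRatio f :=
  if_neg hall

theorem dualNorm_zero : h.dualNorm 0 = 0 := by
  by_cases hall : ∀ v, h.norm v = 0
  · simp [h.dualNorm_of_forall hall]
  · simp [h.dualNorm_of_not_forall hall, supRatio]

theorem dualNorm_smul {c : ℂ} (hc : c ≠ 0) (f : V → ℂ) :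
    h.dualNorm (c • f) = ENNReal.ofReal ‖c‖ * h.dualNorm f := by
  by_cases hall : ∀ v, h.norm v = 0
  · simp [h.dualNorm_of_forall hall, hc]
  · simp only [h.dualNorm_of_not_forall hall, h.supRatio_smul]

theorem dualNorm_add_le (f g : V → ℂ) : h.dualNorm (f + g) ≤ h.dualNorm f + h.dualNorm g := by
  by_cases hall : ∀ v, h.norm v = 0
  · simp only [h.dualNorm_of_forall hall, Pi.add_apply]
    split_ifs <;> simp_all
  · simpa only [h.dualNorm_of_not_forall hall] using h.supRatio_add_le f g

abbrev toNormedAddCommGroup (hp : h.PosDef) (hfin : h.Finite) : NormedAddCommGroup V :=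
  AddGroupNorm.toNormedAddCommGroup
    { toFun v := (h.norm v).toReal
      map_zero' := by simp [h.norm_zero]
      add_le' v w := by
        rw [← ENNReal.toReal_add (hfin v) (hfin w)]
        exact ENNReal.toReal_mono (ENNReal.add_ne_top.2 ⟨hfin v, hfin w⟩) (h.triangle v w)
      neg' v := by simp only [h.norm_neg]
      eq_zero_of_map_eq_zero' v hv :=
        hp v (((ENNReal.toReal_eq_zero_iff _).1 hv).resolve_right (hfin v)) }

theorem enorm_toNormedAddCommGroup (hp : h.PosDef) (hfin : h.Finite) (v : V) :
    letI := h.toNormedAddCommGroup hp hfin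
    ‖v‖ₑ = h.norm v :=
  (ENNReal.ofReal_eq_coe_nnreal _).symm.trans (ENNReal.ofReal_toReal (hfin v))

abbrev toInnerProductSpace (hp : h.PosDef) (hfin : h.Finite) :
    letI := h.toNormedAddCommGroup hp hfin
    InnerProductSpace ℂ V :=
  letI := h.toNormedAddCommGroup hp hfin
  have norm_eq (v : V) : ‖v‖ = (h.norm v).toReal := rfl
  letI : NormedSpace ℂ V :=
    { (inferInstance : Module ℂ V) with
      norm_smul_le c v := by
        rcases eq_or_ne c 0 with rfl | hc
        · simp
        · rw [norm_eq, norm_eq, h.norm_smul c hc, ENNReal.toReal_mul,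
            ENNReal.toReal_ofReal (norm_nonneg c)] }
  InnerProductSpace.ofNorm ℂ fun v w => by
    have hpar := h.parallelogram v w
    rw [← ofReal_toReal (hfin (v + w)), ← ofReal_toReal (hfin (v - w)),
      ← ofReal_toReal (hfin v), ← ofReal_toReal (hfin w),
      ENNReal.ofReal_parallelogram_iff toReal_nonneg toReal_nonneg toReal_nonneg
        toReal_nonneg] at hpar
    simp only [norm_eq]
    linear_combination hpar

theorem supRatio_parallelogram [FiniteDimensional ℂ V] (hp : h.PosDef) (hfin : h.Finite)
    (f g : V →ₗ[ℂ] ℂ) :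
    h.supRatio ⇑(f + g) ^ 2 + h.supRatio ⇑(f - g) ^ 2 =
      2 * h.supRatio f ^ 2 + 2 * h.supRatio g ^ 2 := by
  let := h.toNormedAddCommGroup hp hfin
  let := h.toInnerProductSpace hp hfin
  have : CompleteSpace V := FiniteDimensional.complete ℂ V
  have norm_eq : h.norm = fun v => ‖v‖ₑ :=
    funext fun v => (h.enorm_toNormedAddCommGroup hp hfin v).symm
  have supRatio_eq (φ : V →ₗ[ℂ] ℂ) : h.supRatio φ = ‖LinearMap.toContinuousLinearMap φ‖ₑ := by
    rw [← ContinuousLinearMap.iSup_enorm_apply_div_enorm, supRatio, norm_eq]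
    simp only [ofReal_norm]
    rfl
  simp only [supRatio_eq, map_add, map_sub]
  exact StrongDual.enorm_parallelogram _ _

theorem supRatio_comap_subtype {U : Submodule ℂ V}
    (hU : h.finiteSubmodule ≤ h.nullSubmodule ⊔ U) {f : V →ₗ[ℂ] ℂ}
    (hf : h.nullSubmodule ≤ LinearMap.ker f) :
    h.supRatio f = (h.comap U.subtype).supRatio ⇑(f ∘ₗ U.subtype) := by
  refine le_antisymm (iSup_le fun ⟨v, hv⟩ => ?_) (iSup_le fun u => h.le_supRatio u.2 f)
  show ENNReal.ofReal ‖f v‖ / h.norm v ≤ _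
  by_cases hv' : h.norm v = ⊤
  · simp [hv']
  obtain ⟨z, hz, u, hu, rfl⟩ := Submodule.mem_sup.1 (hU hv')
  have hz : h.norm z = 0 := hz
  have hnorm : h.norm (z + u) = h.norm u := by
    rw [add_comm]
    exact h.norm_add_of_norm_eq_zero hz u
  rw [map_add, LinearMap.mem_ker.1 (hf hz), zero_add, hnorm]
  exact (h.comap U.subtype).le_supRatio (v := ⟨u, hu⟩) (hnorm ▸ hv) _

theorem supRatio_eq_top {w z : V} (hw : h.norm w ≠ 0) (hw' : h.norm w ≠ ⊤) (hz : h.norm z = 0)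
    {f : V →ₗ[ℂ] ℂ} (hfz : f z ≠ 0) : h.supRatio f = ⊤ := by
  refine ENNReal.eq_top_of_forall_nnreal_le fun r => ?_
  set x : ℝ := r * (h.norm w).toReal
  set v := w + ((x - f w) / f z) • z
  have hv : h.norm v = h.norm w := h.norm_add_of_norm_eq_zero (h.nullSubmodule.smul_mem _ hz) w
  have hfv : f v = x := by simp [v, hfz]
  calc (r : ℝ≥0∞) = ENNReal.ofReal ‖f v‖ / h.norm v := by
        rw [hv, hfv, Complex.norm_real, Real.norm_of_nonneg (by positivity),
          ENNReal.ofReal_mul r.coe_nonneg, ofReal_coe_nnreal, ofReal_toReal hw',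
          ENNReal.mul_div_cancel_right hw hw']
    _ ≤ h.supRatio f := h.le_supRatio (hv ▸ hw) f

theorem nullSubmodule_le_ker_of_dualNorm_ne_top {w : V} (hw : h.norm w ≠ 0)
    (hw' : h.norm w ≠ ⊤) {f : V →ₗ[ℂ] ℂ} (hf : h.dualNorm f ≠ ⊤) :
    h.nullSubmodule ≤ LinearMap.ker f := fun _ hz =>
  not_not.1 fun hfz => hf <|
    (h.dualNorm_of_not_forall (fun hall => hw (hall w)) f).trans (h.supRatio_eq_top hw hw' hz hfz)

theorem dualNorm_eq_zero_of_ne_top (h0 : ∀ v, h.norm v = 0 ∨ h.norm v = ⊤) {f : V → ℂ}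
    (hf : h.dualNorm f ≠ ⊤) : h.dualNorm f = 0 := by
  by_cases hall : ∀ v, h.norm v = 0
  · rw [h.dualNorm_of_forall hall] at hf ⊢
    split_ifs at hf ⊢ <;> simp_all
  · rw [h.dualNorm_of_not_forall hall]
    refine le_antisymm (iSup_le fun v => ?_) zero_le
    simp [(h0 v).resolve_left v.2]

theorem dualNorm_parallelogram [FiniteDimensional ℂ V] (f g : V →ₗ[ℂ] ℂ) :
    h.dualNorm ⇑(f + g) ^ 2 + h.dualNorm ⇑(f - g) ^ 2 =
      2 * h.dualNorm f ^ 2 + 2 * h.dualNorm g ^ 2 := by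
  refine parallelogram_of_ne_top (N := fun φ : V →ₗ[ℂ] ℂ => h.dualNorm φ)
    (fun c hc φ => h.dualNorm_smul hc φ) (fun φ ψ => h.dualNorm_add_le φ ψ)
    (fun f g hf hg hfg hfg' => ?_) f g
  by_cases h0 : ∀ v, h.norm v = 0 ∨ h.norm v = ⊤
  · simp [h.dualNorm_eq_zero_of_ne_top h0, hf, hg, hfg, hfg']
  push Not at h0
  obtain ⟨w, hw, hw'⟩ := h0
  obtain ⟨U, hdisj, hsup⟩ :=
    IsModularLattice.exists_disjoint_and_sup_eq h.nullSubmodule_le_finiteSubmodule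
  have dualNorm_eq (φ : V →ₗ[ℂ] ℂ) (hφ : h.dualNorm φ ≠ ⊤) :
      h.dualNorm φ = (h.comap U.subtype).supRatio ⇑(φ ∘ₗ U.subtype) :=
    (h.dualNorm_of_not_forall (fun hall => hw (hall w)) φ).trans
      (h.supRatio_comap_subtype hsup.ge (h.nullSubmodule_le_ker_of_dualNorm_ne_top hw hw' hφ))
  simp only [dualNorm_eq f hf, dualNorm_eq g hg, dualNorm_eq _ hfg, dualNorm_eq _ hfg',
    LinearMap.add_comp, LinearMap.sub_comp]
  exact (h.comap U.subtype).supRatio_parallelogram (h.comap_subtype_posDef hdisj)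
    (h.comap_subtype_finite (hsup ▸ le_sup_right)) _ _

end SingularHermitianInnerProduct

/-- The dual function of a singular hermitian inner product on a
finite-dimensional complex vector space `V` is again a singular hermitian inner product
on the dual space `V* = Hom_ℂ(V, ℂ)`: it satisfies homogeneity, the triangle inequality,
and the parallelogram law. -/
theorem dualNorm_singularHermitian {V : Type*} [AddCommGroup V] [Module ℂ V]
    [FiniteDimensional ℂ V] (h : SingularHermitianInnerProduct V) :
    ∃ hstar : SingularHermitianInnerProduct (V →ₗ[ℂ] ℂ),
      ∀ f : V →ₗ[ℂ] ℂ, hstar.norm f = h.dualNorm f :=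
  ⟨{ norm φ := h.dualNorm φ
     norm_zero := h.dualNorm_zero
     norm_smul _ hc φ := h.dualNorm_smul hc φ
     triangle φ ψ := h.dualNorm_add_le φ ψ
     parallelogram := h.dualNorm_parallelogram }, fun _ => rfl⟩
end
end

section
/- Let h be a singular hermitian inner product on a finite-dimensional complex vector space V which is positive definite or finite, and let f : V → ℂ be a nonzero linear functional. For λ ∈ ℂ define |λ|_{h,f} = inf{ |v|_h : v ∈ V, f(v) = λ } ∈ [0,+∞]. Then for every nonzero λ ∈ ℂ one has |λ|_{h,f} = |λ| / |f|_{h*}, with the conventions |λ|/0 = +∞ and |λ|/(+∞) = 0. -/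
noncomputable section

open MeasureTheory ENNReal Metric Complex Filter Classical

open SingularHermitianInnerProduct

private lemma ennreal_div_div_cancel {a b : ℝ≥0∞} (ha0 : a ≠ 0) (hat : a ≠ ⊤) :
    a / (a / b) = b := by
  rw [div_eq_mul_inv, ENNReal.inv_div (Or.inr hat) (Or.inr ha0), ENNReal.mul_div_cancel ha0 hat]

/-- Let `h` be a singular hermitian inner product, positive definite or
finite, on a finite-dimensional complex vector space `V`, and `f : V → ℂ` a nonzero
linear functional. For every nonzero `λ ∈ ℂ`, the induced length
`|λ|_{h,f} = inf { |v|_h : f v = λ }` equals `|λ| / |f|_{h*}` (with `a/0 = +∞` for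
`a ≠ 0`, and `a/+∞ = 0`). -/
theorem inducedNorm_eq_div_dualNorm {V : Type*} [AddCommGroup V] [Module ℂ V]
    [FiniteDimensional ℂ V] (h : SingularHermitianInnerProduct V)
    (hh : h.PosDef ∨ h.Finite) (f : V →ₗ[ℂ] ℂ) (hf : f ≠ 0)
    (lam : ℂ) (hlam : lam ≠ 0) :
    (⨅ v : {v : V // f v = lam}, h.norm v.1) = ENNReal.ofReal ‖lam‖ / h.dualNorm f := by
  obtain ⟨u, hu⟩ : ∃ u : V, f u ≠ 0 := by
    by_contra h'
    push_neg at h'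
    exact hf (LinearMap.ext fun v => by simp [h' v])
  have hlam0 : ENNReal.ofReal ‖lam‖ ≠ 0 := by
    simp [ENNReal.ofReal_eq_zero, not_le, norm_pos_iff, hlam]
  have hlamt : ENNReal.ofReal ‖lam‖ ≠ ⊤ := ENNReal.ofReal_ne_top
  have hsm0 : ∀ (c : ℂ) (v : V), h.norm v = 0 → h.norm (c • v) = 0 := by
    intro c v hv
    by_cases hc : c = 0
    · simp [hc, h.norm_zero]
    · rw [h.norm_smul c hc, hv, mul_zero]
  have hne : Nonempty {v : V // f v = lam} :=
    ⟨⟨(lam * (f u)⁻¹) • u, by simp [mul_assoc, inv_mul_cancel₀ hu]⟩⟩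
  by_cases hdeg : ∀ v : V, h.norm v = 0
  · have hdual : h.dualNorm f = ⊤ := by
      rw [dualNorm, if_pos hdeg, if_neg]
      push_neg
      exact ⟨u, hu⟩
    rw [hdual, ENNReal.div_top]
    refine le_antisymm ?_ zero_le
    obtain ⟨v⟩ := hne
    exact iInf_le_of_le v (le_of_eq (hdeg v.1))
  · rw [dualNorm, if_neg hdeg]
    set S := ⨆ v : {v : V // h.norm v ≠ 0}, ENNReal.ofReal ‖f v.1‖ / h.norm v.1 with hS
    refine le_antisymm ?_ ?_
    · -- inf ≤ lam / S
      rw [ENNReal.le_div_iff_mul_le (Or.inr hlam0) (Or.inr hlamt), ENNReal.mul_iSup]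
      refine iSup_le ?_
      rintro ⟨w, hw⟩
      by_cases hfw : f w = 0
      · simp [hfw]
      · have hb0 : ENNReal.ofReal ‖f w‖ ≠ 0 := by
          simp [ENNReal.ofReal_eq_zero, not_le, norm_pos_iff, hfw]
        have hbt : ENNReal.ofReal ‖f w‖ ≠ ⊤ := ENNReal.ofReal_ne_top
        have hvw : f ((lam / f w) • w) = lam := by
          simp [div_mul_cancel₀ _ hfw]
        have hinf : (⨅ v : {v : V // f v = lam}, h.norm v.1)
            ≤ ENNReal.ofReal ‖lam‖ / ENNReal.ofReal ‖f w‖ * h.norm w := by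
          refine le_trans (iInf_le_of_le ⟨(lam / f w) • w, hvw⟩ le_rfl) ?_
          rw [h.norm_smul _ (div_ne_zero hlam hfw)]
          rw [norm_div, ENNReal.ofReal_div_of_pos (norm_pos_iff.mpr hfw)]
        refine le_trans (mul_le_mul_left hinf _) ?_
        by_cases hwt : h.norm w = ⊤
        · rw [hwt, ENNReal.div_top, mul_zero]
          exact zero_le
        · calc ENNReal.ofReal ‖lam‖ / ENNReal.ofReal ‖f w‖ * h.norm w *
              (ENNReal.ofReal ‖f w‖ / h.norm w)
              = ENNReal.ofReal ‖lam‖ * ((ENNReal.ofReal ‖f w‖)⁻¹ * ENNReal.ofReal ‖f w‖) *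
                (h.norm w * (h.norm w)⁻¹) := by
                rw [div_eq_mul_inv, div_eq_mul_inv]; ring
            _ = ENNReal.ofReal ‖lam‖ := by
                rw [ENNReal.inv_mul_cancel hb0 hbt, ENNReal.mul_inv_cancel hw hwt,
                  mul_one, mul_one]
            _ ≤ ENNReal.ofReal ‖lam‖ := le_rfl
    · -- lam / S ≤ inf
      refine le_iInf ?_
      rintro ⟨v, hv⟩
      by_cases hv0 : h.norm v = 0
      · rcases hh with hpd | hfin
        · exact absurd (by rw [hpd v hv0, map_zero] at hv; exact hv.symm) hlam
        · -- finite case: S = ⊤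
          push_neg at hdeg
          obtain ⟨w, hw⟩ := hdeg
          have hwt : h.norm w ≠ ⊤ := hfin w
          have key : ∀ n : ℕ, (n : ℝ≥0∞) / h.norm w ≤ S := by
            intro n
            set c : ℂ := ((n : ℂ) - f w) / lam with hc
            set wn := w + c • v with hwn
            have hcv : h.norm (c • v) = 0 := hsm0 c v hv0
            have h1 : h.norm wn ≤ h.norm w :=
              le_trans (h.triangle w (c • v)) (by rw [hcv, add_zero])
            have h2 : h.norm w ≤ h.norm wn := by
              have hrw : w = wn + (-c) • v := by
                rw [hwn]
                module
              calc h.norm w = h.norm (wn + (-c) • v) := by rw [← hrw]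
                _ ≤ h.norm wn + h.norm ((-c) • v) := h.triangle _ _
                _ = h.norm wn := by rw [hsm0 (-c) v hv0, add_zero]
            have heq : h.norm wn = h.norm w := le_antisymm h1 h2
            have hfwn : f wn = (n : ℂ) := by
              simp only [hwn, map_add, LinearMap.map_smul, hv, smul_eq_mul, hc]
              rw [div_mul_cancel₀ _ hlam]
              ring
            have hterm := le_iSup
              (fun v : {v : V // h.norm v ≠ 0} => ENNReal.ofReal ‖f v.1‖ / h.norm v.1)
              ⟨wn, by rw [heq]; exact hw⟩
            simp only [hfwn, heq] at hterm
            refine le_trans (le_of_eq ?_) hterm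
            congr 1
            rw [Complex.norm_natCast, ENNReal.ofReal_natCast]
          have hStop : S = ⊤ := by
            have : (⨆ n : ℕ, (n : ℝ≥0∞) / h.norm w) ≤ S := iSup_le key
            rwa [← ENNReal.iSup_div, ENNReal.iSup_natCast,
              ENNReal.top_div_of_ne_top hwt, top_le_iff] at this
          rw [hStop, ENNReal.div_top]
          exact zero_le
      · by_cases hvt : h.norm v = ⊤
        · rw [hvt]; exact le_top
        · have hterm : ENNReal.ofReal ‖lam‖ / h.norm v ≤ S := by
            have := le_iSup
              (fun v : {v : V // h.norm v ≠ 0} => ENNReal.ofReal ‖f v.1‖ / h.norm v.1)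
              ⟨v, hv0⟩
            simpa [hv, hS] using this
          calc ENNReal.ofReal ‖lam‖ / S
              ≤ ENNReal.ofReal ‖lam‖ / (ENNReal.ofReal ‖lam‖ / h.norm v) :=
                ENNReal.div_le_div_left hterm _
            _ = h.norm v := ennreal_div_div_cancel hlam0 hlamt
end
end

section
/- Let B ⊆ ℂⁿ be the open unit ball and r ≥ 1. Suppose that for each x ∈ B we are given a positive definite singular hermitian inner product |·|_{h,x} on ℂ^r, and let f : ℂ^r → ℂ be a linear functional with |f(v)| ≤ |v|_{h,x} for every x ∈ B and every v ∈ ℂ^r. Let s : B → ℂ^r be a holomorphic map such that x ↦ |s(x)|²_{h,x} is Lebesgue-measurable, f(s(0)) = 1, and ∫_B |s(x)|²_{h,x} dλ(x) ≤ λ(B). Then f(s(x)) = 1 for every x ∈ B, and |s(x)|_{h,x} = 1 for almost every x ∈ B. -/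
noncomputable section

open MeasureTheory ENNReal Metric Complex Filter

open Classical

open SingularHermitianInnerProduct

section AuxRigidity

variable {E : Type*} [NormedAddCommGroup E] [NormedSpace ℂ E]

/-- Multiplication by a unit complex number, as a real-linear isometry equivalence. -/
def rotLIE (c : ℂ) (hc : ‖c‖ = 1) : E ≃ₗᵢ[ℝ] E where
  toFun := fun x => c • x
  invFun := fun x => c⁻¹ • x
  map_add' := smul_add c
  map_smul' := fun r x => smul_comm c r x
  left_inv := fun x => by
    have hc0 : c ≠ 0 := by intro h; simp [h] at hc
    simp [smul_smul, inv_mul_cancel₀ hc0]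
  right_inv := fun x => by
    have hc0 : c ≠ 0 := by intro h; simp [h] at hc
    simp [smul_smul, mul_inv_cancel₀ hc0]
  norm_map' := fun x => by simp [_root_.norm_smul, hc]

@[simp] lemma rotLIE_apply (c : ℂ) (hc : ‖c‖ = 1) (x : E) : rotLIE c hc x = c • x := rfl

/-- Mean value property along circles in complex lines through the origin. -/
lemma integral_circleMap_smul {g : E → ℂ} (hg : DifferentiableOn ℂ g (ball 0 1))
    {x : E} (hx : x ∈ ball (0 : E) 1) :
    ∫ θ in (0:ℝ)..(2 * Real.pi), g (circleMap 0 1 θ • x) = 2 * Real.pi * g 0 := by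
  have hx1 : ‖x‖ < 1 := by simpa [mem_ball, dist_eq_norm] using hx
  set ψ : ℂ → ℂ := fun z => g (z • x) with hψdef
  have hsm : Differentiable ℂ (fun z : ℂ => z • x) := differentiable_id.smul_const x
  have hψ : DifferentiableOn ℂ ψ (closedBall (0:ℂ) 1) := by
    refine DifferentiableOn.comp hg hsm.differentiableOn ?_
    intro z hz
    have hz1 : ‖z‖ ≤ 1 := by simpa [mem_closedBall, dist_eq_norm] using hz
    have : ‖z • x‖ < 1 := by
      rw [_root_.norm_smul]
      calc ‖z‖ * ‖x‖ ≤ 1 * ‖x‖ := mul_le_mul_of_nonneg_right hz1 (norm_nonneg x)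
        _ = ‖x‖ := one_mul _
        _ < 1 := hx1
    simpa [mem_ball, dist_eq_norm] using this
  have hC := hψ.circleIntegral_sub_inv_smul (w := 0) (mem_ball_self one_pos)
  have h2 : (∮ z in C(0, 1), (z - 0)⁻¹ • ψ z)
      = Complex.I * ∫ θ in (0:ℝ)..(2 * Real.pi), ψ (circleMap 0 1 θ) := by
    rw [circleIntegral, ← intervalIntegral.integral_const_mul]
    refine intervalIntegral.integral_congr fun θ _ => ?_
    have hne : circleMap 0 1 θ ≠ 0 := circleMap_ne_center one_ne_zero
    simp only [deriv_circleMap, sub_zero, smul_eq_mul]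
    field_simp
  rw [h2] at hC
  have hC' : Complex.I * ∫ θ in (0:ℝ)..(2 * Real.pi), ψ (circleMap 0 1 θ)
      = Complex.I * (2 * Real.pi * g 0) := by
    rw [hC]
    have : ψ 0 = g 0 := by simp [hψdef]
    rw [this]
    simp only [smul_eq_mul]
    ring
  have := mul_left_cancel₀ Complex.I_ne_zero hC'
  simpa [hψdef] using this

end AuxRigidity

/-- Let `B ⊆ ℂⁿ` be the open unit ball and `r ≥ 1`; for each `x ∈ B`
let `|·|_{h,x}` be a positive definite singular hermitian inner product on `ℂ^r`, and let
`f : ℂ^r → ℂ` be a linear functional with `|f(v)| ≤ |v|_{h,x}` for every `x ∈ B` and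
every `v`. If `s : B → ℂ^r` is holomorphic, `x ↦ |s x|²_{h,x}` is measurable,
`f (s 0) = 1` and `∫_B |s x|²_{h,x} dλ(x) ≤ λ(B)`, then `f (s x) = 1` for every `x ∈ B`
and `|s x|_{h,x} = 1` for almost every `x ∈ B`. -/
theorem minimal_extension_rigidity {n r : ℕ} (hr : 1 ≤ r)
    (h : EuclideanSpace ℂ (Fin n) → SingularHermitianInnerProduct (Fin r → ℂ))
    (hpd : ∀ x ∈ ball (0 : EuclideanSpace ℂ (Fin n)) 1, (h x).PosDef)
    (f : (Fin r → ℂ) →ₗ[ℂ] ℂ)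
    (hf : ∀ x ∈ ball (0 : EuclideanSpace ℂ (Fin n)) 1, ∀ v : Fin r → ℂ,
      ENNReal.ofReal ‖f v‖ ≤ (h x).norm v)
    (s : EuclideanSpace ℂ (Fin n) → Fin r → ℂ)
    (hs : DifferentiableOn ℂ s (ball 0 1))
    (hmeas : AEMeasurable (fun x => ((h x).norm (s x)) ^ 2)
      (volume.restrict (ball (0 : EuclideanSpace ℂ (Fin n)) 1)))
    (hs0 : f (s 0) = 1)
    (hint : ∫⁻ x in ball (0 : EuclideanSpace ℂ (Fin n)) 1, ((h x).norm (s x)) ^ 2 ≤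
      volume (ball (0 : EuclideanSpace ℂ (Fin n)) 1)) :
    (∀ x ∈ ball (0 : EuclideanSpace ℂ (Fin n)) 1, f (s x) = 1) ∧
    ∀ᵐ x ∂(volume.restrict (ball (0 : EuclideanSpace ℂ (Fin n)) 1)),
      (h x).norm (s x) = 1 := by
  classical
  set B : Set (EuclideanSpace ℂ (Fin n)) := ball 0 1 with hBdef
  set g : EuclideanSpace ℂ (Fin n) → ℂ := fun x => f (s x) with hgdef
  have hBm : MeasurableSet B := measurableSet_ball
  have hBo : IsOpen B := isOpen_ball
  have hvol_ne : volume B ≠ ⊤ := measure_ball_lt_top.ne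
  have hgd : DifferentiableOn ℂ g B :=
    (LinearMap.toContinuousLinearMap f).differentiable.comp_differentiableOn hs
  have hgc : ContinuousOn g B := hgd.continuousOn
  have hgm : AEStronglyMeasurable g (volume.restrict B) := hgc.aestronglyMeasurable hBm
  have hg0 : g 0 = 1 := hs0
  -- pointwise bound on the holomorphic function by the singular metric
  have hgb : ∀ x ∈ B, (‖g x‖₊ : ℝ≥0∞) ≤ (h x).norm (s x) := by
    intro x hx
    rw [← enorm_eq_nnnorm, ← ofReal_norm]
    exact hf x hx (s x)
  have hsq : ∀ x ∈ B, ((‖g x‖₊ : ℝ≥0∞)) ^ 2 ≤ (h x).norm (s x) ^ 2 := fun x hx =>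
    pow_le_pow_left₀ zero_le (hgb x hx) 2
  have hL2 : ∫⁻ x in B, ((‖g x‖₊ : ℝ≥0∞)) ^ 2 ≤ volume B := by
    refine le_trans (lintegral_mono_ae ?_) hint
    filter_upwards [ae_restrict_mem hBm] with x hx using hsq x hx
  -- the L¹ bound
  have hself : ∀ a : ℝ≥0∞, a ≤ 1 + a ^ 2 := by
    intro a
    rcases le_total a 1 with h1 | h1
    · exact h1.trans le_self_add
    · calc a = 1 * a := (one_mul a).symm
        _ ≤ a * a := mul_le_mul_left h1 a
        _ = a ^ 2 := (sq a).symm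
        _ ≤ 1 + a ^ 2 := le_add_self
  have hgL1 : ∫⁻ x in B, (‖g x‖₊ : ℝ≥0∞) ≤ volume B + volume B := by
    calc ∫⁻ x in B, (‖g x‖₊ : ℝ≥0∞)
        ≤ ∫⁻ x in B, (1 + (‖g x‖₊ : ℝ≥0∞) ^ 2) := lintegral_mono fun x => hself _
      _ = volume B + ∫⁻ x in B, ((‖g x‖₊ : ℝ≥0∞)) ^ 2 := by
          rw [lintegral_add_left measurable_const, setLIntegral_one]
      _ ≤ volume B + volume B := add_le_add_right hL2 _
  have hgL1' : ∫⁻ x in B, (‖g x‖₊ : ℝ≥0∞) < ⊤ :=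
    lt_of_le_of_lt hgL1 (ENNReal.add_lt_top.2 ⟨measure_ball_lt_top, measure_ball_lt_top⟩)
  have hgInt : Integrable g (volume.restrict B) := ⟨hgm, hgL1'⟩
  -- rotations are measure preserving
  have hcirc : ∀ θ : ℝ, ‖circleMap 0 1 θ‖ = 1 := by
    intro θ; simp
  have rot : ∀ θ : ℝ,
      MeasurePreserving (fun x : EuclideanSpace ℂ (Fin n) => circleMap 0 1 θ • x)
        (volume.restrict B) (volume.restrict B) ∧
      MeasurableEmbedding (fun x : EuclideanSpace ℂ (Fin n) => circleMap 0 1 θ • x) := by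
    intro θ
    set e : EuclideanSpace ℂ (Fin n) ≃ₗᵢ[ℝ] EuclideanSpace ℂ (Fin n) :=
      rotLIE (circleMap 0 1 θ) (hcirc θ) with hedef
    have he : (fun x : EuclideanSpace ℂ (Fin n) => circleMap 0 1 θ • x) = e := rfl
    have hpre : e ⁻¹' B = B := by
      rw [hBdef, show (0 : EuclideanSpace ℂ (Fin n)) = e.symm 0 by simp]
      exact (e.preimage_ball _ _).trans (by simp)
    have mp : MeasurePreserving e volume volume := e.measurePreserving
    have mp' := mp.restrict_preimage hBm
    rw [hpre] at mp'
    exact ⟨by rw [he]; exact mp', by rw [he]; exact e.toHomeomorph.measurableEmbedding⟩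
  -- Fubini over rotations
  set T : ℝ → EuclideanSpace ℂ (Fin n) → ℂ := fun θ x => g (circleMap 0 1 θ • x) with hTdef
  set μ : Measure ℝ := volume.restrict (Set.Ioc (0:ℝ) (2 * Real.pi)) with hμdef
  set ν : Measure (EuclideanSpace ℂ (Fin n)) := volume.restrict B with hνdef
  have hTc : ContinuousOn (Function.uncurry T) ((Set.univ : Set ℝ) ×ˢ B) := by
    refine hgc.comp ?_ ?_
    · exact (((continuous_circleMap 0 1).comp continuous_fst).smul continuous_snd).continuousOn
    · rintro ⟨θ, x⟩ ⟨-, hx⟩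
      have hx1 : ‖x‖ < 1 := by simpa [hBdef, mem_ball, dist_eq_norm] using hx
      have : ‖circleMap 0 1 θ • x‖ < 1 := by
        rw [_root_.norm_smul, hcirc θ, one_mul]; exact hx1
      simpa [hBdef, mem_ball, dist_eq_norm] using this
  have hTm : AEStronglyMeasurable (Function.uncurry T) (μ.prod ν) := by
    rw [hμdef, hνdef, Measure.prod_restrict]
    exact (hTc.mono (Set.prod_mono (Set.subset_univ _) subset_rfl)).aestronglyMeasurable
      (measurableSet_Ioc.prod hBm)
  have hTi : Integrable (Function.uncurry T) (μ.prod ν) := by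
    refine ⟨hTm, ?_⟩
    have heq : ∫⁻ p, ‖Function.uncurry T p‖₊ ∂(μ.prod ν)
        = ∫⁻ θ, (∫⁻ x, (‖T θ x‖₊ : ℝ≥0∞) ∂ν) ∂μ := lintegral_prod _ hTm.aemeasurable.enorm
    rw [HasFiniteIntegral]; simp only [enorm_eq_nnnorm]; rw [heq]
    have hin : ∀ θ : ℝ, ∫⁻ x, (‖T θ x‖₊ : ℝ≥0∞) ∂ν = ∫⁻ x in B, (‖g x‖₊ : ℝ≥0∞) := by
      intro θ
      exact (rot θ).1.lintegral_comp_emb (rot θ).2 (fun x => (‖g x‖₊ : ℝ≥0∞))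
    calc ∫⁻ θ, (∫⁻ x, (‖T θ x‖₊ : ℝ≥0∞) ∂ν) ∂μ
        = ∫⁻ _ : ℝ, (∫⁻ x in B, (‖g x‖₊ : ℝ≥0∞)) ∂μ := lintegral_congr fun θ => hin θ
      _ = (∫⁻ x in B, (‖g x‖₊ : ℝ≥0∞)) * μ Set.univ := lintegral_const _
      _ < ⊤ := by
          apply ENNReal.mul_lt_top hgL1'
          rw [hμdef, Measure.restrict_apply_univ]
          exact measure_Ioc_lt_top
  have hswap := MeasureTheory.integral_integral_swap hTi
  -- the left-hand side of Fubini
  have hLHS : ∫ θ, (∫ x, T θ x ∂ν) ∂μ = (2 * Real.pi) • ∫ x in B, g x := by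
    have hin : ∀ θ : ℝ, ∫ x, T θ x ∂ν = ∫ x in B, g x := by
      intro θ
      exact (rot θ).1.integral_comp (rot θ).2 g
    rw [integral_congr_ae (Filter.Eventually.of_forall hin), integral_const]
    congr 1
    rw [hμdef, measureReal_def, Measure.restrict_apply_univ, Real.volume_Ioc, sub_zero,
      ENNReal.toReal_ofReal (by positivity)]
  -- the right-hand side of Fubini
  have hRHS : ∫ x, (∫ θ, T θ x ∂μ) ∂ν = (volume B).toReal • ((2 * Real.pi : ℝ) : ℂ) := by
    have hin : ∀ x ∈ B, (fun y => ∫ θ, T θ y ∂μ) x = ((2 * Real.pi : ℝ) : ℂ) := by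
      intro x hx
      have h1 : ∫ θ, T θ x ∂μ = ∫ θ in (0:ℝ)..(2 * Real.pi), g (circleMap 0 1 θ • x) := by
        rw [hμdef, intervalIntegral.integral_of_le (by positivity : (0:ℝ) ≤ 2 * Real.pi)]
      show (∫ θ, T θ x ∂μ) = _
      rw [h1, integral_circleMap_smul hgd hx, hg0]
      push_cast
      ring
    rw [hνdef, setIntegral_congr_fun hBm hin, setIntegral_const, measureReal_def]
  rw [hLHS, hRHS] at hswap
  -- mean value of g over the ball
  have hM : ∫ x in B, g x = (((volume B).toReal : ℝ) : ℂ) := by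
    have h2π : ((2 * Real.pi : ℝ) : ℂ) ≠ 0 := by
      rw [Complex.ofReal_ne_zero]
      positivity
    have hmul : ((2 * Real.pi : ℝ) : ℂ) * ∫ x in B, g x
        = ((2 * Real.pi : ℝ) : ℂ) * (((volume B).toReal : ℝ) : ℂ) := by
      calc ((2 * Real.pi : ℝ) : ℂ) * ∫ x in B, g x = (2 * Real.pi) • ∫ x in B, g x := by
            rw [Complex.real_smul]
        _ = (volume B).toReal • ((2 * Real.pi : ℝ) : ℂ) := hswap
        _ = ((2 * Real.pi : ℝ) : ℂ) * (((volume B).toReal : ℝ) : ℂ) := by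
            rw [Complex.real_smul]; ring
    exact mul_left_cancel₀ h2π hmul
  -- now the L² rigidity
  have hofReal : ∀ x, ENNReal.ofReal (‖g x‖ ^ 2) = ((‖g x‖₊ : ℝ≥0∞)) ^ 2 := by
    intro x
    rw [ENNReal.ofReal_pow (norm_nonneg _), ofReal_norm, enorm_eq_nnnorm]
  have hgsqm : AEStronglyMeasurable (fun x => ‖g x‖ ^ 2) ν :=
    ((hgc.norm).pow 2).aestronglyMeasurable hBm
  have hgsqInt : Integrable (fun x => ‖g x‖ ^ 2) ν := by
    refine ⟨hgsqm, ?_⟩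
    rw [HasFiniteIntegral]
    have heq : ∀ x, (‖(‖g x‖ ^ 2)‖₊ : ℝ≥0∞) = ((‖g x‖₊ : ℝ≥0∞)) ^ 2 := fun x => by
      rw [← enorm_eq_nnnorm, Real.enorm_eq_ofReal (by positivity), hofReal x]
    calc ∫⁻ x, (‖(‖g x‖ ^ 2)‖₊ : ℝ≥0∞) ∂ν = ∫⁻ x, ((‖g x‖₊ : ℝ≥0∞)) ^ 2 ∂ν :=
          lintegral_congr heq
      _ ≤ volume B := hL2
      _ < ⊤ := measure_ball_lt_top
  have hI1 : ∫ x, ‖g x‖ ^ 2 ∂ν ≤ (volume B).toReal := by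
    rw [integral_eq_lintegral_of_nonneg_ae (Filter.Eventually.of_forall fun x => by positivity)
      hgsqm]
    refine ENNReal.toReal_mono hvol_ne ?_
    calc ∫⁻ x, ENNReal.ofReal (‖g x‖ ^ 2) ∂ν = ∫⁻ x, ((‖g x‖₊ : ℝ≥0∞)) ^ 2 ∂ν :=
          lintegral_congr hofReal
      _ ≤ volume B := hL2
  have hre : ∫ x, (g x).re ∂ν = (volume B).toReal := by
    have h1 := integral_re hgInt
    rw [show (∫ x, g x ∂ν) = (((volume B).toReal : ℝ) : ℂ) from hM] at h1
    simpa using h1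
  have hreInt : Integrable (fun x => (g x).re) ν := hgInt.re
  have hqeq : (fun x => ‖g x - 1‖ ^ 2) = fun x => ‖g x‖ ^ 2 - 2 * (g x).re + 1 := by
    funext x
    rw [Complex.sq_norm, Complex.sq_norm,
      Complex.normSq_apply, Complex.normSq_apply, Complex.sub_re, Complex.sub_im,
      Complex.one_re, Complex.one_im]
    ring
  have hfinν : IsFiniteMeasure ν :=
    ⟨by rw [hνdef, Measure.restrict_apply_univ]; exact measure_ball_lt_top⟩
  have hInt2 : Integrable (fun x => ‖g x‖ ^ 2 - 2 * (g x).re) ν := by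
    exact hgsqInt.sub (hreInt.const_mul 2)
  have hInt3 : Integrable (fun x => ‖g x‖ ^ 2 - 2 * (g x).re + 1) ν := by
    exact hInt2.add (integrable_const 1)
  have hqInt : Integrable (fun x => ‖g x - 1‖ ^ 2) ν := by
    rw [hqeq]; exact hInt3
  have hint1 : ∫ _x, (1:ℝ) ∂ν = (volume B).toReal := by
    rw [integral_const, smul_eq_mul, mul_one, hνdef, measureReal_def, Measure.restrict_apply_univ]
  have hq0 : ∫ x, ‖g x - 1‖ ^ 2 ∂ν = 0 := by
    have hle : ∫ x, ‖g x - 1‖ ^ 2 ∂ν ≤ 0 := by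
      rw [hqeq, integral_add hInt2 (integrable_const 1),
        integral_sub hgsqInt (hreInt.const_mul 2), integral_const_mul, hre]
      have hc1 : ∫ _x, (1:ℝ) ∂ν = (volume B).toReal := hint1
      rw [hc1]
      linarith [hI1]
    have hge : 0 ≤ ∫ x, ‖g x - 1‖ ^ 2 ∂ν := integral_nonneg fun x => by positivity
    linarith
  have hae1 : ∀ᵐ x ∂ν, g x = 1 := by
    have h0 := (integral_eq_zero_iff_of_nonneg (fun x => by positivity) hqInt).mp hq0
    filter_upwards [h0] with x hx
    have hx' : ‖g x - 1‖ ^ 2 = 0 := hx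
    have h1 : ‖g x - 1‖ = 0 := by
      have := (pow_eq_zero_iff (two_ne_zero)).mp hx'
      exact this
    exact sub_eq_zero.mp (norm_eq_zero.mp h1)
  -- from a.e. to everywhere, by continuity
  have hall : ∀ x ∈ B, g x = 1 := by
    intro x hx
    by_contra hne
    have hU : IsOpen (B ∩ g ⁻¹' {(1:ℂ)}ᶜ) :=
      hgc.isOpen_inter_preimage hBo isOpen_compl_singleton
    have hsub : B ∩ g ⁻¹' {(1:ℂ)}ᶜ ⊆ {y | ¬ g y = 1} ∩ B := by
      rintro y ⟨hy1, hy2⟩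
      exact ⟨hy2, hy1⟩
    have h1 : ν ({y | ¬ g y = 1}) = 0 := ae_iff.mp hae1
    rw [hνdef, Measure.restrict_apply' hBm] at h1
    have h0 : volume (B ∩ g ⁻¹' {(1:ℂ)}ᶜ) = 0 := measure_mono_null hsub h1
    exact absurd h0 (hU.measure_pos volume ⟨x, hx, hne⟩).ne'
  refine ⟨hall, ?_⟩
  -- second part : the norm is 1 almost everywhere
  have hone : ∀ᵐ x ∂ν, (fun _ => (1:ℝ≥0∞)) x ≤ (h x).norm (s x) ^ 2 := by
    filter_upwards [ae_restrict_mem hBm] with x hx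
    have h3 : f (s x) = 1 := hall x hx
    have h2 := hf x hx (s x)
    rw [h3] at h2
    simp only [norm_one, ENNReal.ofReal_one] at h2
    calc (1:ℝ≥0∞) = 1 ^ 2 := (one_pow 2).symm
      _ ≤ (h x).norm (s x) ^ 2 := pow_le_pow_left₀ zero_le h2 2
  have hlint1 : ∫⁻ _x, (1:ℝ≥0∞) ∂ν = volume B := by
    rw [lintegral_one, hνdef, Measure.restrict_apply_univ]
  have heq := ae_eq_of_ae_le_of_lintegral_le hone (by rw [hlint1]; exact hvol_ne) hmeas
    (by rw [hlint1]; exact hint)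
  filter_upwards [heq] with x hx
  have hx' : (h x).norm (s x) ^ 2 = 1 := hx.symm
  by_contra hne
  rcases lt_or_gt_of_ne hne with hlt | hgt
  · have h2 := ENNReal.pow_lt_pow_left (two_ne_zero) hlt (a := (h x).norm (s x)) (b := 1)
    rw [one_pow] at h2
    exact absurd hx' (ne_of_lt h2)
  · have h2 := ENNReal.pow_lt_pow_left (two_ne_zero) hgt (a := 1) (b := (h x).norm (s x))
    rw [one_pow] at h2
    exact absurd hx' (ne_of_gt h2)
end
end

section
/- Let B ⊆ ℂⁿ be the open unit ball and let f : B → ℂ be a holomorphic function with f(0) = 1 and ∫_B |f|² dλ ≤ λ(B). Then f is identically equal to 1 on B. -/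
noncomputable section

open MeasureTheory ENNReal Metric Complex Real

namespace HUR

variable {n : ℕ}

def rotE (c : ℂ) (hc : ‖c‖ = 1) :
    EuclideanSpace ℂ (Fin n) ≃ₗᵢ[ℝ] EuclideanSpace ℂ (Fin n) where
  toLinearEquiv := (LinearEquiv.smulOfNeZero ℂ _ c
    (by rintro rfl; simp at hc)).restrictScalars ℝ
  norm_map' := fun x => by
    show ‖c • x‖ = ‖x‖
    rw [norm_smul, hc, one_mul]

@[simp] lemma rotE_apply (c : ℂ) (hc : ‖c‖ = 1) (x : EuclideanSpace ℂ (Fin n)) :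
    rotE c hc x = c • x := rfl

lemma rotE_preimage_ball (c : ℂ) (hc : ‖c‖ = 1) :
    (fun z : EuclideanSpace ℂ (Fin n) => c • z) ⁻¹' (ball 0 1) = ball 0 1 := by
  ext z
  simp [mem_ball_zero_iff, norm_smul, hc]

lemma rotE_mp (c : ℂ) (hc : ‖c‖ = 1) :
    MeasurePreserving (fun z : EuclideanSpace ℂ (Fin n) => c • z)
      (volume.restrict (ball 0 1)) (volume.restrict (ball 0 1)) := by
  have h := (rotE (n := n) c hc).measurePreserving
  have h2 := h.restrict_preimage (measurableSet_ball (x := (0:EuclideanSpace ℂ (Fin n))) (ε := 1))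
  rwa [show (rotE (n := n) c hc) ⁻¹' (ball 0 1) = ball 0 1 from rotE_preimage_ball c hc] at h2

lemma norm_one_add_sq (w : ℂ) : ‖(1 : ℂ) + w‖ ^ 2 = 1 + 2 * w.re + ‖w‖ ^ 2 := by
  rw [← Complex.normSq_eq_norm_sq, ← Complex.normSq_eq_norm_sq]
  simp [Complex.normSq_apply]
  ring

lemma norm_circleMap (θ : ℝ) : ‖circleMap 0 1 θ‖ = 1 := by
  simp

/-- mean-value over the ball: a holomorphic integrable function with value 0 at 0
has zero integral over the unit ball -/
lemma integral_eq_zero_of_holo (g : EuclideanSpace ℂ (Fin n) → ℂ)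
    (hgd : DifferentiableOn ℂ g (ball 0 1)) (hg0 : g 0 = 0)
    (hgi : Integrable g (volume.restrict (ball (0:EuclideanSpace ℂ (Fin n)) 1))) :
    ∫ z in ball (0:EuclideanSpace ℂ (Fin n)) 1, g z = 0 := by
  set B : Set (EuclideanSpace ℂ (Fin n)) := ball 0 1 with hB
  set μ := (volume : Measure (EuclideanSpace ℂ (Fin n))).restrict B with hμ
  set μθ := (volume : Measure ℝ).restrict (Set.Ioc 0 (2*π)) with hμθ
  have hBopen : IsOpen B := isOpen_ball
  have hBmeas : MeasurableSet B := measurableSet_ball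
  have hgc : ContinuousOn g B := hgd.continuousOn
  -- step 1 : circle averages vanish
  have hcirc : ∀ z ∈ B, (∫ θ in Set.Ioc 0 (2*π), g (circleMap 0 1 θ • z)) = 0 := by
    intro z hz
    set φ : ℂ → ℂ := fun w => g (w • z) with hφ
    have hφd : DiffContOnCl ℂ φ (ball 0 1) := by
      apply DifferentiableOn.diffContOnCl
      rw [closure_ball (0:ℂ) one_ne_zero]
      intro w hw
      have hmem : w • z ∈ B := by
        rw [hB, mem_ball_zero_iff] at hz ⊢
        calc ‖w • z‖ = ‖w‖ * ‖z‖ := norm_smul _ _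
          _ ≤ 1 * ‖z‖ := by
              have := mem_closedBall_zero_iff.mp hw
              gcongr
          _ < 1 := by rwa [one_mul]
      exact (((hgd.differentiableAt (hBopen.mem_nhds hmem))).comp w
        ((differentiable_id.smul_const z) w)).differentiableWithinAt
    have h0 : φ 0 = 0 := by simp [hφ, hg0]
    have hC := hφd.circleIntegral_sub_inv_smul (mem_ball_self one_pos)
    rw [h0, smul_zero] at hC
    have hexp : (∮ w in C(0,1), (w - 0)⁻¹ • φ w)
        = ∫ θ in (0:ℝ)..2*π, I • φ (circleMap 0 1 θ) := by
      rw [circleIntegral]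
      refine intervalIntegral.integral_congr fun θ _ => ?_
      rw [deriv_circleMap]
      have h1 : circleMap 0 1 θ ≠ 0 := circleMap_ne_center one_ne_zero
      rw [sub_zero, smul_smul]
      congr 1
      field_simp
    rw [hexp, intervalIntegral.integral_smul] at hC
    have h2 : (∫ θ in (0:ℝ)..2*π, φ (circleMap 0 1 θ)) = 0 := by
      rcases smul_eq_zero.mp hC with h | h
      · exact absurd h I_ne_zero
      · exact h
    rw [intervalIntegral.integral_of_le (by positivity : (0:ℝ) ≤ 2*π)] at h2
    exact h2
  -- step 2: Fubini setup
  set F : ℝ × EuclideanSpace ℂ (Fin n) → ℂ := fun p => g (circleMap 0 1 p.1 • p.2) with hF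
  have hFcont : ContinuousOn F (Set.univ ×ˢ B) := by
    have hm : Continuous fun p : ℝ × EuclideanSpace ℂ (Fin n) => circleMap 0 1 p.1 • p.2 :=
      ((continuous_circleMap 0 1).comp continuous_fst).smul continuous_snd
    apply hgc.comp hm.continuousOn
    intro p hp
    rw [hB, mem_ball_zero_iff]
    calc ‖circleMap 0 1 p.1 • p.2‖ = ‖circleMap 0 1 p.1‖ * ‖p.2‖ := norm_smul _ _
      _ = ‖p.2‖ := by rw [norm_circleMap, one_mul]
      _ < 1 := mem_ball_zero_iff.mp hp.2
  have hFsm : AEStronglyMeasurable F (μθ.prod μ) := by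
    have h1 : μθ.prod μ = ((volume : Measure ℝ).prod volume).restrict
        ((Set.Ioc 0 (2*π)) ×ˢ B) := Measure.prod_restrict _ _
    have h2 := hFcont.aestronglyMeasurable (μ := ((volume : Measure ℝ).prod volume)) (MeasurableSet.univ.prod hBmeas)
    rw [h1]
    exact h2.mono_measure
      (Measure.restrict_mono (Set.prod_mono (Set.subset_univ _) subset_rfl) le_rfl)
  have hemb : ∀ (c : ℂ), ‖c‖ = 1 → MeasurableEmbedding
      (fun z : EuclideanSpace ℂ (Fin n) => c • z) := fun c hc =>
    (rotE c hc).toHomeomorph.measurableEmbedding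
  have hinner_lint : ∀ θ : ℝ,
      (∫⁻ z, ‖g (circleMap 0 1 θ • z)‖₊ ∂μ) = ∫⁻ z, ‖g z‖₊ ∂μ := fun θ =>
    (rotE_mp _ (norm_circleMap θ)).lintegral_comp_emb
      (hemb _ (norm_circleMap θ)) (fun z => (‖g z‖₊ : ℝ≥0∞))
  have hFint : Integrable F (μθ.prod μ) := by
    refine ⟨hFsm, ?_⟩
    rw [HasFiniteIntegral, lintegral_prod _ hFsm.enorm]
    simp only [enorm_eq_nnnorm]
    have : (∫⁻ θ, ∫⁻ z, ‖F (θ, z)‖₊ ∂μ ∂μθ) = ∫⁻ _θ, (∫⁻ z, ‖g z‖₊ ∂μ) ∂μθ := by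
      refine lintegral_congr fun θ => ?_
      exact hinner_lint θ
    rw [this, lintegral_const]
    have h1 : (∫⁻ z, ‖g z‖₊ ∂μ) < ⊤ := hgi.2
    have h2 : μθ Set.univ < ⊤ := by
      rw [hμθ, Measure.restrict_apply_univ, Real.volume_Ioc]
      exact ofReal_lt_top
    exact ENNReal.mul_lt_top h1 h2
  have hswap := integral_integral_swap
    (f := fun (θ : ℝ) (z : EuclideanSpace ℂ (Fin n)) => g (circleMap 0 1 θ • z))
    (μ := μθ) (ν := μ) hFint
  have hL : (∫ θ, ∫ z, g (circleMap 0 1 θ • z) ∂μ ∂μθ) = (2*π) • ∫ z, g z ∂μ := by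
    have hc : ∀ θ : ℝ, (∫ z, g (circleMap 0 1 θ • z) ∂μ) = ∫ z, g z ∂μ := fun θ =>
      (rotE_mp _ (norm_circleMap θ)).integral_comp (hemb _ (norm_circleMap θ)) g
    simp_rw [hc]
    rw [hμθ, setIntegral_const, measureReal_def, Real.volume_Ioc,
      ENNReal.toReal_ofReal (by simp; positivity : (0:ℝ) ≤ 2*π - 0)]
    norm_num
  have hR : (∫ z, ∫ θ, g (circleMap 0 1 θ • z) ∂μθ ∂μ) = 0 := by
    rw [hμ]
    rw [setIntegral_congr_fun hBmeas (g := fun _ => (0:ℂ))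
      (fun z hz => hcirc z hz)]
    simp
  rw [hL, hR] at hswap
  have h2π : (2*π : ℝ) ≠ 0 := by positivity
  rcases smul_eq_zero.mp hswap with h | h
  · exact absurd h h2π
  · exact h

end HUR

/-- Let `B ⊆ ℂⁿ` be the open unit ball and `f : B → ℂ` holomorphic with
`f(0) = 1` and `∫_B |f|² dλ ≤ λ(B)`. Then `f ≡ 1` on `B`. -/
theorem holomorphic_unit_rigidity {n : ℕ} (f : EuclideanSpace ℂ (Fin n) → ℂ)
    (hf : DifferentiableOn ℂ f (ball 0 1)) (hf0 : f 0 = 1)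
    (hint : ∫⁻ x in ball (0 : EuclideanSpace ℂ (Fin n)) 1, ENNReal.ofReal (‖f x‖ ^ 2) ≤
      volume (ball (0 : EuclideanSpace ℂ (Fin n)) 1)) :
    ∀ x ∈ ball (0 : EuclideanSpace ℂ (Fin n)) 1, f x = 1 := by
  classical
  set B : Set (EuclideanSpace ℂ (Fin n)) := ball 0 1 with hB
  set μ := (volume : Measure (EuclideanSpace ℂ (Fin n))).restrict B with hμ
  have hBopen : IsOpen B := isOpen_ball
  have hBmeas : MeasurableSet B := measurableSet_ball
  have hBfin : volume B ≠ ⊤ := measure_ball_lt_top.ne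
  have hμfin : IsFiniteMeasure μ :=
    ⟨by rw [hμ, Measure.restrict_apply_univ]; exact measure_ball_lt_top⟩
  set g : EuclideanSpace ℂ (Fin n) → ℂ := fun z => f z - 1 with hg
  have hgd : DifferentiableOn ℂ g B := hf.sub (differentiableOn_const 1)
  have hg0 : g 0 = 0 := by simp [hg, hf0]
  have hfc : ContinuousOn f B := hf.continuousOn
  have hgc : ContinuousOn g B := hgd.continuousOn
  have hfm : AEStronglyMeasurable f μ := hfc.aestronglyMeasurable hBmeas
  have hf2m : AEStronglyMeasurable (fun z => ‖f z‖ ^ 2) μ := by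
    have he : (fun z => ‖f z‖ ^ 2) = fun z => ‖f z‖ * ‖f z‖ := funext fun z => pow_two _
    rw [he]; exact hfm.norm.mul hfm.norm
  have hf2fin : (∫⁻ z, ENNReal.ofReal (‖f z‖ ^ 2) ∂μ) < ⊤ := lt_of_le_of_lt hint hBfin.lt_top
  have hf2i : Integrable (fun z => ‖f z‖ ^ 2) μ := by
    refine ⟨hf2m, ?_⟩
    rw [HasFiniteIntegral]
    have he : ∀ z, (‖(‖f z‖ ^ 2)‖₊ : ℝ≥0∞) = ENNReal.ofReal (‖f z‖ ^ 2) := fun z => by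
      rw [← enorm_eq_nnnorm, ← ofReal_norm, Real.norm_of_nonneg (by positivity)]
    simpa only [enorm_eq_nnnorm, he] using hf2fin
  have hfi : Integrable f μ := by
    refine ⟨hfm, ?_⟩
    rw [HasFiniteIntegral]
    have key : ∀ z, (‖f z‖₊ : ℝ≥0∞) ≤ 1 + ENNReal.ofReal (‖f z‖ ^ 2) := by
      intro z
      rw [← enorm_eq_nnnorm, ← ofReal_norm, ENNReal.ofReal_pow (norm_nonneg _)]
      set a := ENNReal.ofReal ‖f z‖ with ha
      rcases le_total a 1 with h | h
      · exact h.trans le_self_add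
      · calc a = a * 1 := (mul_one a).symm
          _ ≤ a * a := by gcongr
          _ = a ^ 2 := (sq a).symm
          _ ≤ 1 + a ^ 2 := le_add_self
    calc (∫⁻ z, ‖f z‖₊ ∂μ) ≤ ∫⁻ z, (1 + ENNReal.ofReal (‖f z‖ ^ 2)) ∂μ := lintegral_mono key
      _ = μ Set.univ + ∫⁻ z, ENNReal.ofReal (‖f z‖ ^ 2) ∂μ := by
          rw [lintegral_add_left measurable_const, lintegral_one]
      _ < ⊤ := ENNReal.add_lt_top.mpr ⟨measure_lt_top μ _, hf2fin⟩
  have hgi : Integrable g μ := hfi.sub (integrable_const 1)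
  have hgrei : Integrable (fun z => (g z).re) μ := hgi.re
  have hpt : ∀ z, ‖f z‖ ^ 2 = 1 + 2 * (g z).re + ‖g z‖ ^ 2 := by
    intro z
    have hz : f z = 1 + g z := by rw [hg]; ring
    rw [hz, HUR.norm_one_add_sq]
  have hg2i : Integrable (fun z => ‖g z‖ ^ 2) μ := by
    have he : (fun z => ‖g z‖ ^ 2) = fun z => ‖f z‖ ^ 2 - 2 * (g z).re - 1 :=
      funext fun z => by rw [hpt z]; ring
    rw [he]
    exact (hf2i.sub (hgrei.const_mul 2)).sub (integrable_const 1)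
  have hint0 : (∫ z, g z ∂μ) = 0 := HUR.integral_eq_zero_of_holo g hgd hg0 hgi
  have hre0 : (∫ z, (g z).re ∂μ) = 0 := by
    have h := integral_re (𝕜 := ℂ) hgi
    simp only [RCLike.re_to_complex] at h
    rw [h, hint0]
    simp
  have hf2val : (∫ z, ‖f z‖ ^ 2 ∂μ) ≤ (volume B).toReal := by
    rw [integral_eq_lintegral_of_nonneg_ae
      (Filter.Eventually.of_forall fun z => by positivity) hf2m]
    exact ENNReal.toReal_mono hBfin hint
  have hsplit : (∫ z, ‖f z‖ ^ 2 ∂μ)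
      = (volume B).toReal + (2 * ∫ z, (g z).re ∂μ) + ∫ z, ‖g z‖ ^ 2 ∂μ := by
    have he : (fun z => ‖f z‖ ^ 2) = fun z => (1 + 2 * (g z).re) + ‖g z‖ ^ 2 := funext hpt
    have h1 : Integrable (fun z => 2 * (g z).re) μ := hgrei.const_mul 2
    have h01 : Integrable (fun z => (1:ℝ) + 2 * (g z).re) μ := (integrable_const 1).add h1
    calc (∫ z, ‖f z‖ ^ 2 ∂μ)
        = ∫ z, ((1 + 2 * (g z).re) + ‖g z‖ ^ 2) ∂μ := by rw [he]
      _ = (∫ z, (1 + 2 * (g z).re) ∂μ) + ∫ z, ‖g z‖ ^ 2 ∂μ := integral_add h01 hg2i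
      _ = ((∫ _z, (1:ℝ) ∂μ) + ∫ z, 2 * (g z).re ∂μ) + ∫ z, ‖g z‖ ^ 2 ∂μ := by
          rw [integral_add (integrable_const 1) h1]
      _ = (volume B).toReal + (2 * ∫ z, (g z).re ∂μ) + ∫ z, ‖g z‖ ^ 2 ∂μ := by
          rw [integral_const, integral_const_mul, hμ, measureReal_def, Measure.restrict_apply_univ]
          simp
  have hg2zero : (∫ z, ‖g z‖ ^ 2 ∂μ) = 0 := by
    have h1 : (∫ z, ‖g z‖ ^ 2 ∂μ) ≤ 0 := by
      rw [hsplit, hre0] at hf2val; linarith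
    exact le_antisymm h1 (integral_nonneg fun z => by positivity)
  have hae : ∀ᵐ z ∂μ, ‖g z‖ ^ 2 = 0 :=
    (integral_eq_zero_iff_of_nonneg (fun z => by positivity) hg2i).mp hg2zero
  have hae0 : g =ᵐ[μ] 0 := by
    refine hae.mono fun z hz => ?_
    have : ‖g z‖ = 0 := by
      have := sq_eq_zero_iff.mp hz
      exact this
    simpa [norm_eq_zero] using this
  have heq : Set.EqOn g 0 B := by
    refine Measure.eqOn_of_ae_eq hae0 hgc continuousOn_const ?_
    rw [hBopen.interior_eq]
    exact subset_closure
  intro x hx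
  have hz := heq hx
  simp only [hg, Pi.zero_apply] at hz
  exact sub_eq_zero.mp hz

end
end
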